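/- arXiv:1902.03719 — 2 statements merged into one kernel-verified Lean document; each statement's English description precedes it below -/
import Mathlib

section
/- Let M be a matroid on ground set [n] with rank function rk, and for 0 < q ≤ 1 define Z¹(w) = Σ_{i∈[n]} q^{−rk({i})} wᵢ and Z²(w) = Σ_{i<j} q^{−rk({i,j})} wᵢwⱼ. Then for all w ∈ ℝⁿ, Z¹(w)² ≥ (2n/(n−1))·Z²(w). -/
open Finset

lemma class_sum_eq {n : ℕ} (R : Fin n → Fin n → Prop) [DecidableRel R]
    (S : Fin n → Finset (Fin n)) (hSfil : ∀ i, S i = univ.filter (R i))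
    (hsymm : ∀ i j, R i j → R j i) (f h : Fin n → ℝ)
    (hh : ∀ i j, R i j → h j = h i) :
    ∑ i, (∑ j ∈ S i, f j) * h i
      = ∑ i, f i * (h i * ((S i).card : ℝ)) := by
  simp only [hSfil]
  have step1 : ∑ i, (∑ j ∈ univ.filter (R i), f j) * h i
      = ∑ i, ∑ j, (if R i j then f j * h i else 0) := by
    refine Finset.sum_congr rfl fun i _ => ?_
    rw [Finset.sum_filter, Finset.sum_mul]
    exact Finset.sum_congr rfl fun j _ => by by_cases hij : R i j <;> simp [hij]
  rw [step1, Finset.sum_comm]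
  refine Finset.sum_congr rfl fun i _ => ?_
  have step2 : ∑ j, (if R j i then f i * h j else 0) = ∑ j, (if R i j then f i * h i else 0) := by
    refine Finset.sum_congr rfl fun j _ => ?_
    by_cases hji : R j i
    · rw [if_pos hji, if_pos (hsymm _ _ hji), hh i j (hsymm _ _ hji)]
    · rw [if_neg hji, if_neg (fun h' => hji (hsymm _ _ h'))]
  rw [step2, ← Finset.sum_filter, Finset.sum_const, nsmul_eq_mul]
  ring

set_option maxHeartbeats 2000000 in
lemma abstract_main {n : ℕ} (hn : 2 ≤ n) (R : Fin n → Fin n → Prop) [DecidableRel R]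
    (hrefl : ∀ i, R i i) (hsymm : ∀ i j, R i j → R j i)
    (hSc : ∀ i j, R i j → univ.filter (R i) = univ.filter (R j))
    (g : ℝ) (hg : 1 ≤ g) (c : Fin n → ℝ) (b : Fin n → Fin n → ℝ)
    (hcg : ∀ i j, i ≠ j → R i j → c i = g)
    (hb1 : ∀ i j, i ≠ j → R i j → b i j = g)
    (hb2 : ∀ i j, i ≠ j → ¬ R i j → b i j = c i * c j)
    (hbsymm : ∀ i j, b i j = b j i)
    (w : Fin n → ℝ) :
    (2 * (n : ℝ) / ((n : ℝ) - 1)) * (∑ i, ∑ j, if i < j then b i j * w i * w j else 0)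
      ≤ (∑ i, c i * w i) ^ 2 := by
  have hn1 : (0:ℝ) < (n:ℝ) - 1 := by
    have : (2:ℝ) ≤ (n:ℝ) := by exact_mod_cast hn
    linarith
  set S : Fin n → Finset (Fin n) := fun i => univ.filter (R i) with hS
  set M : Fin n → ℝ := fun i => ((S i).card : ℝ) with hM
  set a : Fin n → ℝ := fun i => c i * w i with ha
  set τ : Fin n → ℝ := fun i => ∑ j ∈ S i, w j with hτ
  set ρ : Fin n → ℝ := fun i => ∑ j ∈ S i, (w j)^2 with hρ
  set t : Fin n → ℝ := fun i => ∑ j ∈ S i, a j with ht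
  set d : ℝ := g^2 - g with hd
  set Z2 : ℝ := ∑ i, ∑ j, if i < j then b i j * w i * w j else 0 with hZ2
  set T : ℝ := ∑ i, a i with hT
  set A2 : ℝ := ∑ i, (a i)^2 with hA2
  set D : ℝ := ∑ i, (w i * τ i - (w i)^2) with hD
  have hmem : ∀ i, i ∈ S i := fun i => by simp [hS, hrefl i]
  have hcard : ∀ i, 0 < (S i).card := fun i => Finset.card_pos.2 ⟨i, hmem i⟩
  have hM1 : ∀ i, (1:ℝ) ≤ M i := fun i => by
    have := hcard i; simp only [hM]; exact_mod_cast this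
  have hMpos : ∀ i, (0:ℝ) < M i := fun i => lt_of_lt_of_le one_pos (hM1 i)
  have hMne : ∀ i, M i ≠ 0 := fun i => ne_of_gt (hMpos i)
  have hdpos : 0 ≤ d := by nlinarith
  -- rank-pair facts
  have hcc : ∀ i j, R i j → c j = c i := by
    intro i j hij
    by_cases h : i = j
    · rw [h]
    · rw [hcg i j h hij, hcg j i (fun h' => h h'.symm) (hsymm _ _ hij)]
  have hMc : ∀ i j, R i j → M j = M i := fun i j hij => by
    simp only [hM, hS]; rw [← hSc i j hij]
  have hτc : ∀ i j, R i j → τ j = τ i := fun i j hij => by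
    simp only [hτ, hS]; rw [← hSc i j hij]
  -- Step: 2 Z2 = T^2 - A2 - d * D
  have hPa : ∑ i, ∑ j, (if i ≠ j then b i j * w i * w j else 0) = Z2 + Z2 := by
    have h1 : ∀ i j : Fin n, (if i ≠ j then b i j * w i * w j else 0)
        = (if i < j then b i j * w i * w j else 0) + (if j < i then b i j * w i * w j else 0) := by
      intro i j
      rcases lt_trichotomy i j with h | h | h
      · simp [h, h.ne, lt_asymm h]
      · simp [h]
      · simp [h, h.ne', lt_asymm h]
    have h2 : ∑ i, ∑ j, ((if i < j then b i j * w i * w j else 0)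
          + (if j < i then b i j * w i * w j else 0))
        = Z2 + ∑ i, ∑ j, (if j < i then b i j * w i * w j else 0) := by
      rw [hZ2]
      rw [← Finset.sum_add_distrib]
      refine Finset.sum_congr rfl fun i _ => ?_
      rw [← Finset.sum_add_distrib]
    have h3 : ∑ i, ∑ j, (if j < i then b i j * w i * w j else 0) = Z2 := by
      rw [Finset.sum_comm, hZ2]
      refine Finset.sum_congr rfl fun i _ => Finset.sum_congr rfl fun j _ => ?_
      by_cases h : i < j
      · rw [if_pos h, if_pos h, hbsymm]; ring
      · rw [if_neg h, if_neg h]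
    calc ∑ i, ∑ j, (if i ≠ j then b i j * w i * w j else 0)
        = ∑ i, ∑ j, ((if i < j then b i j * w i * w j else 0)
          + (if j < i then b i j * w i * w j else 0)) := by
          exact Finset.sum_congr rfl fun i _ => Finset.sum_congr rfl fun j _ => h1 i j
      _ = Z2 + Z2 := by rw [h2, h3]
  have hPb : ∑ i, ∑ j, (if i ≠ j then b i j * w i * w j else 0)
      = (∑ i, ∑ j, (if i ≠ j then a i * a j else 0))
        - (∑ i, ∑ j, (if R i j ∧ i ≠ j then d * (w i * w j) else 0)) := by
    rw [← Finset.sum_sub_distrib]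
    refine Finset.sum_congr rfl fun i _ => ?_
    rw [← Finset.sum_sub_distrib]
    refine Finset.sum_congr rfl fun j _ => ?_
    by_cases hij : i = j
    · simp [hij]
    · by_cases hR : R i j
      · rw [if_pos hij, if_pos hij, if_pos ⟨hR, hij⟩, hb1 i j hij hR, ha]
        simp only
        rw [hcg i j hij hR, hcc i j hR, hcg i j hij hR, hd]
        ring
      · rw [if_pos hij, if_pos hij, if_neg (fun h => hR h.1), hb2 i j hij hR, ha]
        simp only
        ring
  have hPc : ∑ i, ∑ j, (if i ≠ j then a i * a j else 0) = T^2 - A2 := by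
    have h1 : ∀ i j : Fin n, (if i ≠ j then a i * a j else 0)
        = a i * a j - (if i = j then a i * a j else 0) := by
      intro i j; by_cases h : i = j <;> simp [h]
    have h2 : ∑ i, ∑ j, (a i * a j) = T^2 := by
      rw [hT, sq, Finset.sum_mul_sum]
    have h3 : ∑ i, ∑ j, (if i = j then a i * a j else 0) = A2 := by
      rw [hA2]
      refine Finset.sum_congr rfl fun i _ => ?_
      rw [Finset.sum_ite_eq]
      simp [sq]
      try ring
    calc ∑ i, ∑ j, (if i ≠ j then a i * a j else 0)
        = ∑ i, ∑ j, (a i * a j - (if i = j then a i * a j else 0)) := by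
          exact Finset.sum_congr rfl fun i _ => Finset.sum_congr rfl fun j _ => h1 i j
      _ = T^2 - A2 := by
          rw [← h2, ← h3, ← Finset.sum_sub_distrib]
          exact Finset.sum_congr rfl fun i _ => by rw [← Finset.sum_sub_distrib]
  have hPd : ∑ i, ∑ j, (if R i j ∧ i ≠ j then d * (w i * w j) else 0) = d * D := by
    have h1 : ∀ i : Fin n, ∑ j, (if R i j ∧ i ≠ j then d * (w i * w j) else 0)
        = d * (w i * τ i - (w i)^2) := by
      intro i
      have e1 : ∀ j : Fin n, (if R i j ∧ i ≠ j then d * (w i * w j) else 0)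
          = (if R i j then d * (w i * w j) else 0) - (if i = j then d * (w i * w j) else 0) := by
        intro j
        by_cases hij : i = j
        · subst hij; simp [hrefl i]
        · by_cases hR : R i j <;> simp [hR, hij]
      rw [Finset.sum_congr rfl fun j _ => e1 j, Finset.sum_sub_distrib]
      have e2 : ∑ j, (if R i j then d * (w i * w j) else 0) = d * (w i * τ i) := by
        rw [← Finset.sum_filter, hτ]
        simp only [← hS]
        rw [Finset.mul_sum, Finset.mul_sum]
        try exact Finset.sum_congr rfl fun j _ => by ring
      have e3 : ∑ j, (if i = j then d * (w i * w j) else 0) = d * (w i)^2 := by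
        rw [Finset.sum_ite_eq]
        simp [sq]
        try ring
      rw [e2, e3]; ring
    rw [Finset.sum_congr rfl fun i _ => h1 i, hD, Finset.mul_sum]
  -- Main inequality: T^2 ≤ n * (A2 + d * D)
  have hSfil : ∀ i, S i = univ.filter (R i) := fun i => rfl
  have hMdef : ∀ i, ((S i).card : ℝ) = M i := fun i => rfl
  have hτdef : ∀ i, (∑ j ∈ S i, w j) = τ i := fun i => rfl
  have hρdef : ∀ i, (∑ j ∈ S i, (w j)^2) = ρ i := fun i => rfl
  have htdef : ∀ i, (∑ j ∈ S i, a j) = t i := fun i => rfl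
  have hρ0 : ∀ i, 0 ≤ ρ i := by
    intro i
    rw [← hρdef i]
    exact Finset.sum_nonneg fun j _ => sq_nonneg _
  have hg0 : (0:ℝ) < g := lt_of_lt_of_le one_pos hg
  have hmain : T^2 ≤ (n:ℝ) * (A2 + d * D) := by
    -- T = ∑ i, t i * (M i)⁻¹
    have hE1 : T = ∑ i, t i * (M i)⁻¹ := by
      have e1 : ∑ i, (∑ j ∈ S i, a j) * (M i)⁻¹ = ∑ i, a i * ((M i)⁻¹ * ((S i).card : ℝ)) :=
        class_sum_eq R S hSfil hsymm a (fun i => (M i)⁻¹)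
          (fun i j hij => by show (M j)⁻¹ = (M i)⁻¹; rw [hMc i j hij])
      simp only [htdef, hMdef] at e1
      rw [hT, e1]
      refine Finset.sum_congr rfl fun i _ => ?_
      rw [inv_mul_cancel₀ (hMne i), mul_one]
    -- Cauchy-Schwarz over all of Fin n
    have hE2 : (∑ i, t i * (M i)⁻¹)^2 ≤ (n:ℝ) * ∑ i, (t i * (M i)⁻¹)^2 := by
      have := sq_sum_le_card_mul_sum_sq (s := (univ : Finset (Fin n)))
        (f := fun i => t i * (M i)⁻¹)
      simpa using this
    -- pointwise bound
    have htc : ∀ i, t i = c i * τ i := by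
      intro i
      have hpt : ∀ j ∈ S i, a j = c i * w j := by
        intro j hj
        rw [hSfil i] at hj
        have hR : R i j := (Finset.mem_filter.1 hj).2
        rw [ha]
        simp only
        rw [hcc i j hR]
      rw [← htdef i, ← hτdef i, Finset.mul_sum]
      exact Finset.sum_congr rfl hpt
    have star : ∀ i, (t i * (M i)⁻¹)^2 ≤ ((c i)^2 * ρ i + d * ((τ i)^2 - ρ i)) * (M i)⁻¹ := by
      intro i
      have hcs : (τ i)^2 ≤ M i * ρ i := by
        have := sq_sum_le_card_mul_sum_sq (s := S i) (f := w)
        rw [hτdef i] at this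
        have h2 : ∑ j ∈ S i, (w j)^2 = ρ i := hρdef i
        rw [h2] at this
        rw [← hMdef i]
        exact_mod_cast this
      have star' : (c i)^2 * (τ i)^2 ≤ ((c i)^2 * ρ i + d * ((τ i)^2 - ρ i)) * M i := by
        by_cases h1 : (S i).card = 1
        · have hSi : S i = {i} := by
            obtain ⟨x, hx⟩ := Finset.card_eq_one.1 h1
            have hi := hmem i
            rw [hx, Finset.mem_singleton] at hi
            rw [hx, hi]
          have hτi : τ i = w i := by rw [← hτdef i, hSi, Finset.sum_singleton]
          have hρi : ρ i = (w i)^2 := by rw [← hρdef i, hSi, Finset.sum_singleton]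
          have hMi : M i = 1 := by rw [← hMdef i, hSi, Finset.card_singleton, Nat.cast_one]
          rw [hτi, hρi, hMi]
          apply le_of_eq
          ring
        · have h2 : 1 < (S i).card := by
            have := hcard i
            omega
          obtain ⟨j, hjS, hji⟩ := Finset.exists_mem_ne h2 i
          rw [hSfil i] at hjS
          have hRij : R i j := (Finset.mem_filter.1 hjS).2
          have hci : c i = g := hcg i j (fun h => hji h.symm) hRij
          rw [hci]
          have key : (τ i)^2 * (g - M i * (g-1)) ≤ M i * ρ i := by
            rcases le_or_gt (g - M i*(g-1)) 0 with hk | hk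
            · have h3 := mul_nonpos_of_nonneg_of_nonpos (sq_nonneg (τ i)) hk
              have h4 : 0 ≤ M i * ρ i := mul_nonneg (le_of_lt (hMpos i)) (hρ0 i)
              linarith
            · calc (τ i)^2 * (g - M i*(g-1)) ≤ (M i * ρ i) * (g - M i*(g-1)) :=
                  mul_le_mul_of_nonneg_right hcs (le_of_lt hk)
                _ ≤ M i * ρ i := by
                    have hle1 : g - M i * (g-1) ≤ 1 := by nlinarith [hM1 i, hg]
                    have hMρ : 0 ≤ M i * ρ i := mul_nonneg (le_of_lt (hMpos i)) (hρ0 i)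
                    nlinarith [mul_le_mul_of_nonneg_left hle1 hMρ]
          have key2 := mul_le_mul_of_nonneg_right key (le_of_lt hg0)
          rw [hd]
          nlinarith [key2]
      have hmul := mul_le_mul_of_nonneg_right star' (sq_nonneg ((M i)⁻¹))
      have hfold : (((c i)^2 * ρ i + d * ((τ i)^2 - ρ i)) * M i) * ((M i)⁻¹)^2
          = ((c i)^2 * ρ i + d * ((τ i)^2 - ρ i)) * (M i)⁻¹ := by
        have e : M i * ((M i)⁻¹)^2 = (M i)⁻¹ := by
          rw [sq, ← mul_assoc, mul_inv_cancel₀ (hMne i), one_mul]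
        rw [mul_assoc, e]
      calc (t i * (M i)⁻¹)^2 = (c i)^2 * (τ i)^2 * ((M i)⁻¹)^2 := by
            rw [htc i]; ring
        _ ≤ (((c i)^2 * ρ i + d * ((τ i)^2 - ρ i)) * M i) * ((M i)⁻¹)^2 := hmul
        _ = ((c i)^2 * ρ i + d * ((τ i)^2 - ρ i)) * (M i)⁻¹ := hfold
    -- sum of pointwise bounds equals A2 + d * D
    have hE3 : ∑ i, (t i * (M i)⁻¹)^2 ≤ A2 + d * D := by
      have hsum := Finset.sum_le_sum (fun i (_ : i ∈ (univ : Finset (Fin n))) => star i)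
      have id1 : ∑ i, (∑ j ∈ S i, (w j)^2) * ((c i)^2 * (M i)⁻¹)
          = ∑ i, (w i)^2 * ((c i)^2 * (M i)⁻¹ * ((S i).card : ℝ)) :=
        class_sum_eq R S hSfil hsymm (fun j => (w j)^2) (fun i => (c i)^2 * (M i)⁻¹)
          (fun i j hij => by show (c j)^2 * (M j)⁻¹ = (c i)^2 * (M i)⁻¹
                             rw [hcc i j hij, hMc i j hij])
      have id2 : ∑ i, (∑ j ∈ S i, w j) * (d * (τ i * (M i)⁻¹))
          = ∑ i, w i * (d * (τ i * (M i)⁻¹) * ((S i).card : ℝ)) :=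
        class_sum_eq R S hSfil hsymm w (fun i => d * (τ i * (M i)⁻¹))
          (fun i j hij => by show d * (τ j * (M j)⁻¹) = d * (τ i * (M i)⁻¹)
                             rw [hτc i j hij, hMc i j hij])
      have id3 : ∑ i, (∑ j ∈ S i, (w j)^2) * (d * (M i)⁻¹)
          = ∑ i, (w i)^2 * (d * (M i)⁻¹ * ((S i).card : ℝ)) :=
        class_sum_eq R S hSfil hsymm (fun j => (w j)^2) (fun i => d * (M i)⁻¹)
          (fun i j hij => by show d * (M j)⁻¹ = d * (M i)⁻¹; rw [hMc i j hij])
      simp only [hρdef, hτdef, hMdef] at id1 id2 id3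
      have id1' : ∑ i, ρ i * ((c i)^2 * (M i)⁻¹) = A2 := by
        rw [id1, hA2]
        refine Finset.sum_congr rfl fun i _ => ?_
        rw [mul_assoc ((c i)^2) ((M i)⁻¹) (M i), inv_mul_cancel₀ (hMne i), mul_one, ha]
        simp only
        ring
      have id2' : ∑ i, τ i * (d * (τ i * (M i)⁻¹)) = ∑ i, d * (w i * τ i) := by
        rw [id2]
        refine Finset.sum_congr rfl fun i _ => ?_
        rw [mul_assoc d (τ i * (M i)⁻¹) (M i), mul_assoc (τ i) ((M i)⁻¹) (M i),
          inv_mul_cancel₀ (hMne i), mul_one]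
        ring
      have id3' : ∑ i, ρ i * (d * (M i)⁻¹) = ∑ i, d * (w i)^2 := by
        rw [id3]
        refine Finset.sum_congr rfl fun i _ => ?_
        rw [mul_assoc d ((M i)⁻¹) (M i), inv_mul_cancel₀ (hMne i), mul_one]
        ring
      have hsplit : ∑ i, ((c i)^2 * ρ i + d * ((τ i)^2 - ρ i)) * (M i)⁻¹
          = (∑ i, ρ i * ((c i)^2 * (M i)⁻¹)) + ((∑ i, τ i * (d * (τ i * (M i)⁻¹)))
            - (∑ i, ρ i * (d * (M i)⁻¹))) := by
        rw [← Finset.sum_sub_distrib, ← Finset.sum_add_distrib]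
        refine Finset.sum_congr rfl fun i _ => ?_
        ring
      have hDsplit : A2 + d * D = A2 + ((∑ i, d * (w i * τ i)) - (∑ i, d * (w i)^2)) := by
        rw [hD, Finset.mul_sum, ← Finset.sum_sub_distrib]
        congr 1
        refine Finset.sum_congr rfl fun i _ => ?_
        ring
      calc ∑ i, (t i * (M i)⁻¹)^2
          ≤ ∑ i, ((c i)^2 * ρ i + d * ((τ i)^2 - ρ i)) * (M i)⁻¹ := hsum
        _ = (∑ i, ρ i * ((c i)^2 * (M i)⁻¹)) + ((∑ i, τ i * (d * (τ i * (M i)⁻¹)))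
            - (∑ i, ρ i * (d * (M i)⁻¹))) := hsplit
        _ = A2 + ((∑ i, d * (w i * τ i)) - (∑ i, d * (w i)^2)) := by
            rw [id1', id2', id3']
        _ = A2 + d * D := hDsplit.symm
    calc T^2 = (∑ i, t i * (M i)⁻¹)^2 := by rw [hE1]
      _ ≤ (n:ℝ) * ∑ i, (t i * (M i)⁻¹)^2 := hE2
      _ ≤ (n:ℝ) * (A2 + d * D) := by
          exact mul_le_mul_of_nonneg_left hE3 (Nat.cast_nonneg n)
  -- conclude
  have h2Z : Z2 + Z2 = T^2 - A2 - d * D := by rw [← hPa, hPb, hPc, hPd]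
  rw [div_mul_eq_mul_div, div_le_iff₀ hn1]
  nlinarith [hmain, h2Z]


def pRel {n : ℕ} (rk : Finset (Fin n) → ℕ) (i j : Fin n) : Prop :=
  i = j ∨ (rk {i} = 1 ∧ rk {j} = 1 ∧ rk {i, j} = 1)

instance pRel.dec {n : ℕ} (rk : Finset (Fin n) → ℕ) : DecidableRel (pRel rk) :=
  fun _ _ => by unfold pRel; infer_instance

theorem stmt16 {n : ℕ} (hn : 2 ≤ n) (rk : Finset (Fin n) → ℕ)
    (hrk0 : rk ∅ = 0)
    (hmono : ∀ A B : Finset (Fin n), A ⊆ B → rk A ≤ rk B)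
    (hunit : ∀ (A : Finset (Fin n)) (i : Fin n), rk (insert i A) ≤ rk A + 1)
    (hsub : ∀ A B : Finset (Fin n), rk (A ∪ B) + rk (A ∩ B) ≤ rk A + rk B)
    (q : ℝ) (hq0 : 0 < q) (hq1 : q ≤ 1) :
    ∀ w : Fin n → ℝ,
      (2 * (n : ℝ) / ((n : ℝ) - 1)) *
          (∑ i, ∑ j, if i < j then (q ^ rk {i, j})⁻¹ * w i * w j else 0) ≤
        (∑ i, (q ^ rk {i})⁻¹ * w i) ^ 2 := by
  intro w
  have hr1 : ∀ i : Fin n, rk {i} ≤ 1 := by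
    intro i
    have := hunit ∅ i
    simpa [hrk0] using this
  have hple : ∀ i j : Fin n, i ≠ j → rk {i, j} ≤ rk {i} + rk {j} := by
    intro i j hij
    have h := hsub {i} {j}
    have hun : ({i} ∪ {j} : Finset (Fin n)) = {i, j} := by ext x; simp
    rw [hun] at h
    have hint : ({i} ∩ {j} : Finset (Fin n)) = ∅ := by
      apply Finset.singleton_inter_of_notMem
      simp [hij]
    rw [hint, hrk0] at h
    omega
  have hge : ∀ i j : Fin n, rk {i} ≤ rk {i, j} :=
    fun i j => hmono _ _ (Finset.singleton_subset_iff.2 (by simp))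
  have hgej : ∀ i j : Fin n, rk {j} ≤ rk {i, j} :=
    fun i j => hmono _ _ (Finset.singleton_subset_iff.2 (by simp))
  have hsymm : ∀ i j : Fin n, pRel rk i j → pRel rk j i := by
    intro i j h
    rcases h with rfl | ⟨h1, h2, h3⟩
    · exact Or.inl rfl
    · exact Or.inr ⟨h2, h1, by rwa [Finset.pair_comm]⟩
  have htrans : ∀ i j k : Fin n, pRel rk i j → pRel rk j k → pRel rk i k := by
    intro i j k h1 h2
    rcases h1 with rfl | ⟨hi1, hj1, hij1⟩
    · exact h2
    rcases h2 with rfl | ⟨hj2, hk1, hjk1⟩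
    · exact Or.inr ⟨hi1, hj1, hij1⟩
    by_cases hik : i = k
    · exact Or.inl hik
    right
    refine ⟨hi1, hk1, ?_⟩
    by_cases hij : i = j
    · subst hij; exact hjk1
    by_cases hjk : j = k
    · subst hjk; exact hij1
    have hint : (({i, j} : Finset (Fin n)) ∩ {j, k}) = {j} := by
      ext x
      simp only [Finset.mem_inter, Finset.mem_insert, Finset.mem_singleton]
      constructor
      · rintro ⟨h1 | h1, h2 | h2⟩ <;> subst_vars <;> tauto
      · rintro rfl; exact ⟨Or.inr rfl, Or.inl rfl⟩
    have hsub2 := hsub {i, j} {j, k}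
    rw [hint] at hsub2
    have hsubset : ({i, k} : Finset (Fin n)) ⊆ {i, j} ∪ {j, k} := by
      intro x hx
      simp only [Finset.mem_insert, Finset.mem_singleton] at hx
      simp only [Finset.mem_union, Finset.mem_insert, Finset.mem_singleton]
      tauto
    have h5 := hmono _ _ hsubset
    have h6 := hge i k
    omega
  have hSc : ∀ i j, pRel rk i j →
      univ.filter (pRel rk i) = univ.filter (pRel rk j) := by
    intro i j hij
    ext x
    simp only [Finset.mem_filter, Finset.mem_univ, true_and]
    exact ⟨fun h => htrans j i x (hsymm i j hij) h, fun h => htrans i j x hij h⟩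
  have hqne : q ≠ 0 := ne_of_gt hq0
  have hqinv : q * q⁻¹ = 1 := mul_inv_cancel₀ hqne
  have hg : (1:ℝ) ≤ q⁻¹ := by nlinarith [inv_pos.2 hq0]
  have hcg : ∀ i j : Fin n, i ≠ j → pRel rk i j → (q ^ rk {i})⁻¹ = q⁻¹ := by
    intro i j hij h
    rcases h with rfl | ⟨h1, _, _⟩
    · exact absurd rfl hij
    · rw [h1, pow_one]
  have hb1 : ∀ i j : Fin n, i ≠ j → pRel rk i j → (q ^ rk {i, j})⁻¹ = q⁻¹ := by
    intro i j hij h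
    rcases h with rfl | ⟨_, _, h3⟩
    · exact absurd rfl hij
    · rw [h3, pow_one]
  have hb2 : ∀ i j : Fin n, i ≠ j → ¬ pRel rk i j →
      (q ^ rk {i, j})⁻¹ = (q ^ rk {i})⁻¹ * (q ^ rk {j})⁻¹ := by
    intro i j hij h
    have h3 : ¬(rk {i} = 1 ∧ rk {j} = 1 ∧ rk {i, j} = 1) := fun hc => h (Or.inr hc)
    have heq : rk {i, j} = rk {i} + rk {j} := by
      have k1 := hple i j hij
      have k2 := hge i j
      have k3 := hgej i j
      have k4 := hr1 i
      have k5 := hr1 j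
      omega
    rw [heq, pow_add, mul_inv]
  have hbsymm : ∀ i j : Fin n, (q ^ rk ({i, j} : Finset (Fin n)))⁻¹ = (q ^ rk {j, i})⁻¹ := by
    intro i j
    rw [Finset.pair_comm]
  exact abstract_main hn (pRel rk) (fun i => Or.inl rfl) hsymm hSc q⁻¹ hg
    (fun i => (q ^ rk {i})⁻¹) (fun i j => (q ^ rk {i, j})⁻¹) hcg hb1 hb2 hbsymm w
end

section
/- Let f = Σ_{k=0}^d a_k w₁ᵏ w₂^{d−k} be a bivariate homogeneous Lorentzian polynomial (equivalently, (a_k) is nonnegative, ultra log-concave, with no internal zeros). Then f is 1-Rayleigh: f(w)·∂₁∂₂f(w) ≤ ∂₁f(w)·∂₂f(w) and f(w)·∂ᵢ²f(w) ≤ (∂ᵢf(w))² for all w in the nonnegative orthant and i ∈ {1,2}. -/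
open Finset

namespace Stmt19Aux

/-- L-weight at index i on antidiagonal s (pair {i+1, s+1-i}). -/
noncomputable def wL (b : ℕ → ℝ) (e s i : ℕ) : ℝ :=
  ((e+1).choose i : ℝ) * ((e+1).choose (s-i) : ℝ) * (b (i+1) * b (s+1-i))

/-- R-weight at index i on antidiagonal s (pair {i, s+2-i}). -/
noncomputable def wR (b : ℕ → ℝ) (e s i : ℕ) : ℝ :=
  ((e+2).choose i : ℝ) * (e.choose (s-i) : ℝ) * (b i * b (s+2-i))

/-- Window sum: pairs with min index ≥ a+2. -/
noncomputable def PHI (b : ℕ → ℝ) (e s a : ℕ) : ℝ :=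
  ∑ i ∈ Ico (a+1) (s-a), wL b e s i - ∑ i ∈ Ico (a+2) (s+1-a), wR b e s i

noncomputable def FF (e s a : ℕ) : ℝ :=
  ((e+1).choose (a+1) : ℝ) * (e.choose (s-a-1) : ℝ) -
    ((e+1).choose (s-a) : ℝ) * (e.choose a : ℝ)

section SL
variable {b : ℕ → ℝ}
  (hb0 : ∀ k, 0 ≤ b k)
  (hlc : ∀ k, b k * b (k+2) ≤ b (k+1)^2)
  (hnz : ∀ p q r, p < q → q < r → 0 < b p → 0 < b r → 0 < b q)

include hb0 hlc hnz in
/-- spread lemma -/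
lemma SL : ∀ n p, b p * b (p+n+2) ≤ b (p+1) * b (p+n+1) := by
  intro n
  induction n with
  | zero =>
    intro p
    simpa [sq] using hlc p
  | succ n ih =>
    intro p
    rcases eq_or_lt_of_le (hb0 (p+1)) with h1 | h1
    · -- b (p+1) = 0
      rcases eq_or_lt_of_le (hb0 p) with h0 | h0
      · rw [← h0]; simpa [show p+(n+1)+1 = p+n+2 by ring] using mul_nonneg (hb0 (p+1)) (hb0 (p+n+2))
      rcases eq_or_lt_of_le (hb0 (p+n+3)) with h3 | h3
      · rw [show p+(n+1)+2 = p+n+3 by ring, ← h3]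
        simpa [show p+(n+1)+1 = p+n+2 by ring] using mul_nonneg (hb0 (p+1)) (hb0 (p+n+2))
      · exact absurd (hnz p (p+1) (p+n+3) (by omega) (by omega) h0 h3) (by rw [← h1]; simp)
    · -- b (p+1) > 0
      rcases eq_or_lt_of_le (hb0 (p+2)) with h2 | h2
      · -- b (p+2) = 0 : then b (p+n+3) = 0 unless contradiction
        rcases eq_or_lt_of_le (hb0 (p+n+3)) with h3 | h3
        · rw [show p+(n+1)+2 = p+n+3 by ring, ← h3]
          simpa [show p+(n+1)+1 = p+n+2 by ring] using mul_nonneg (hb0 (p+1)) (hb0 (p+n+2))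
        · exact absurd (hnz (p+1) (p+2) (p+n+3) (by omega) (by omega) h1 h3)
            (by rw [← h2]; simp)
      · -- both positive: combine hlc p with ih (p+1)
        have key := mul_le_mul (hlc p) (ih (p+1))
          (mul_nonneg (hb0 (p+1)) (hb0 (p+1+n+2))) (sq_nonneg (b (p+1)))
        have hpos : 0 < b (p+1) * b (p+2) := mul_pos h1 h2
        rw [← mul_le_mul_iff_of_pos_right hpos]
        calc b p * b (p+(n+1)+2) * (b (p+1) * b (p+2))
            = b p * b (p+2) * (b (p+1) * b (p+1+n+2)) := by ring_nf
          _ ≤ b (p+1)^2 * (b (p+2) * b (p+1+n+1)) := key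
          _ = b (p+1) * b (p+(n+1)+1) * (b (p+1) * b (p+2)) := by ring_nf
  
end SL

/-- FF is nonnegative in the relevant range -/
lemma FF_nonneg (e s a : ℕ) (h : 2*a+2 ≤ s) : 0 ≤ FF e s a := by
  have key : (s-a) * ((e+1).choose (s-a) * e.choose a)
      = (a+1) * ((e+1).choose (a+1) * e.choose (s-a-1)) := by
    have h1 : (e+1) * e.choose a = (e+1).choose (a+1) * (a+1) := Nat.add_one_mul_choose_eq e a
    have h2 : (e+1) * e.choose (s-a-1) = (e+1).choose (s-a) * (s-a) := by
      have h3 := Nat.add_one_mul_choose_eq e (s-a-1)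
      rw [show (s-a-1)+1 = s-a by omega] at h3
      exact h3
    calc (s-a) * ((e+1).choose (s-a) * e.choose a)
        = ((e+1).choose (s-a) * (s-a)) * e.choose a := by ring
      _ = ((e+1) * e.choose (s-a-1)) * e.choose a := by rw [h2]
      _ = ((e+1) * e.choose a) * e.choose (s-a-1) := by ring
      _ = ((e+1).choose (a+1) * (a+1)) * e.choose (s-a-1) := by rw [h1]
      _ = (a+1) * ((e+1).choose (a+1) * e.choose (s-a-1)) := by ring
  have hle : (a+1) * ((e+1).choose (s-a) * e.choose a)
      ≤ (a+1) * ((e+1).choose (a+1) * e.choose (s-a-1)) := by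
    calc (a+1) * ((e+1).choose (s-a) * e.choose a)
        ≤ (s-a) * ((e+1).choose (s-a) * e.choose a) := by
          apply Nat.mul_le_mul_right; omega
      _ = (a+1) * ((e+1).choose (a+1) * e.choose (s-a-1)) := key
  have := Nat.le_of_mul_le_mul_left hle (by omega)
  unfold FF
  have := (Nat.cast_le (α := ℝ)).mpr this
  push_cast at this
  linarith


-- pure binomial identities (over ℝ)
lemma idE (e a : ℕ) :
    ((e+1).choose (a+1) : ℝ) * ((e+1).choose (a+1)) - ((e+2).choose (a+2) : ℝ) * (e.choose a)
      = ((e+1).choose (a+1) : ℝ) * (e.choose (a+1)) - ((e+1).choose (a+2) : ℝ) * (e.choose a) := by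
  have p1 : (e+1).choose (a+1) = e.choose a + e.choose (a+1) := Nat.choose_succ_succ e a
  have p2 : (e+1).choose (a+2) = e.choose (a+1) + e.choose (a+2) := Nat.choose_succ_succ e (a+1)
  have p3 : (e+2).choose (a+2) = (e+1).choose (a+1) + (e+1).choose (a+2) :=
    Nat.choose_succ_succ (e+1) (a+1)
  rw [p3, p2, p1]; push_cast; ring

lemma idO (e a : ℕ) :
    2 * (((e+1).choose (a+1) : ℝ) * ((e+1).choose (a+2)))
      - ((e+2).choose (a+2) : ℝ) * (e.choose (a+1)) - ((e+2).choose (a+3) : ℝ) * (e.choose a)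
      = ((e+1).choose (a+1) : ℝ) * (e.choose (a+2)) - ((e+1).choose (a+3) : ℝ) * (e.choose a) := by
  have p1 : (e+1).choose (a+1) = e.choose a + e.choose (a+1) := Nat.choose_succ_succ e a
  have p2 : (e+1).choose (a+2) = e.choose (a+1) + e.choose (a+2) := Nat.choose_succ_succ e (a+1)
  have p2' : (e+1).choose (a+3) = e.choose (a+2) + e.choose (a+3) := Nat.choose_succ_succ e (a+2)
  have p3 : (e+2).choose (a+2) = (e+1).choose (a+1) + (e+1).choose (a+2) :=
    Nat.choose_succ_succ (e+1) (a+1)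
  have p4 : (e+2).choose (a+3) = (e+1).choose (a+2) + (e+1).choose (a+3) :=
    Nat.choose_succ_succ (e+1) (a+2)
  rw [p4, p3, p2', p2, p1]; push_cast; ring

lemma idS (e a q : ℕ) :
    2 * (((e+1).choose (a+1) : ℝ) * ((e+1).choose (q+1)))
      - ((e+2).choose (a+2) : ℝ) * (e.choose q) - ((e+2).choose (q+2) : ℝ) * (e.choose a)
      + (((e+1).choose (a+2) : ℝ) * (e.choose q) - ((e+1).choose (q+1) : ℝ) * (e.choose (a+1)))
      = ((e+1).choose (a+1) : ℝ) * (e.choose (q+1)) - ((e+1).choose (q+2) : ℝ) * (e.choose a) := by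
  have p1 : (e+1).choose (a+1) = e.choose a + e.choose (a+1) := Nat.choose_succ_succ e a
  have p2 : (e+1).choose (q+1) = e.choose q + e.choose (q+1) := Nat.choose_succ_succ e q
  have p3 : (e+2).choose (a+2) = (e+1).choose (a+1) + (e+1).choose (a+2) :=
    Nat.choose_succ_succ (e+1) (a+1)
  have p4 : (e+2).choose (q+2) = (e+1).choose (q+1) + (e+1).choose (q+2) :=
    Nat.choose_succ_succ (e+1) (q+1)
  rw [p4, p3, p2, p1]; push_cast; ring


section Claim
variable {b : ℕ → ℝ}
  (hb0 : ∀ k, 0 ≤ b k)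
  (hlc : ∀ k, b k * b (k+2) ≤ b (k+1)^2)
  (hnz : ∀ p q r, p < q → q < r → 0 < b p → 0 < b r → 0 < b q)

lemma base_even (e a : ℕ) :
    FF e (2*a+2) a * (b (a+2) * b (2*a+2-a)) ≤ PHI b e (2*a+2) a := by
  have eL : ∑ i ∈ Ico (a+1) (2*a+2-a), wL b e (2*a+2) i = wL b e (2*a+2) (a+1) := by
    rw [Finset.sum_Ico_eq_sum_range]
    simp only [show 2*a+2-a - (a+1) = 1 from by omega, Finset.sum_range_one, add_zero]
  have eR : ∑ i ∈ Ico (a+2) (2*a+2+1-a), wR b e (2*a+2) i = wR b e (2*a+2) (a+2) := by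
    rw [Finset.sum_Ico_eq_sum_range]
    simp only [show 2*a+2+1-a - (a+2) = 1 from by omega, Finset.sum_range_one, add_zero]
  rw [PHI, eL, eR]
  simp only [wL, wR, FF,
    show 2*a+2 - (a+1) = a+1 from by omega,
    show (a:ℕ)+1+1 = a+2 from rfl,
    show 2*a+2+1 - (a+1) = a+2 from by omega,
    show 2*a+2 - (a+2) = a from by omega,
    show 2*a+2+2 - (a+2) = a+2 from by omega,
    show 2*a+2 - a - 1 = a+1 from by omega,
    show (a:ℕ)+2-1 = a+1 from by omega,
    show 2*a+2 - a = a+2 from by omega]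
  apply le_of_eq
  linear_combination (-(b (a+2) * b (a+2))) * idE e a

lemma base_odd (e a : ℕ) :
    FF e (2*a+3) a * (b (a+2) * b (2*a+3-a)) ≤ PHI b e (2*a+3) a := by
  have eL : ∑ i ∈ Ico (a+1) (2*a+3-a), wL b e (2*a+3) i
      = wL b e (2*a+3) (a+1) + wL b e (2*a+3) (a+2) := by
    rw [Finset.sum_Ico_eq_sum_range]
    simp only [show 2*a+3-a - (a+1) = 2 from by omega]
    rw [Finset.sum_range_succ, Finset.sum_range_one]
  have eR : ∑ i ∈ Ico (a+2) (2*a+3+1-a), wR b e (2*a+3) i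
      = wR b e (2*a+3) (a+2) + wR b e (2*a+3) (a+3) := by
    rw [Finset.sum_Ico_eq_sum_range]
    simp only [show 2*a+3+1-a - (a+2) = 2 from by omega]
    rw [Finset.sum_range_succ, Finset.sum_range_one]
  rw [PHI, eL, eR]
  simp only [wL, wR, FF,
    show 2*a+3 - (a+1) = a+2 from by omega,
    show (a:ℕ)+1+1 = a+2 from rfl,
    show (a:ℕ)+2+1 = a+3 from rfl,
    show 2*a+3+1 - (a+1) = a+3 from by omega,
    show 2*a+3 - (a+2) = a+1 from by omega,
    show 2*a+3+1 - (a+2) = a+2 from by omega,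
    show 2*a+3 - (a+3) = a from by omega,
    show 2*a+3+2 - (a+2) = a+3 from by omega,
    show 2*a+3+2 - (a+3) = a+2 from by omega,
    show 2*a+3 - a - 1 = a+2 from by omega,
    show (a:ℕ)+3-1 = a+2 from by omega,
    show 2*a+3 - a = a+3 from by omega]
  apply le_of_eq
  linear_combination (-(b (a+2) * b (a+3))) * idO e a

include hb0 hlc hnz in
lemma claim (e : ℕ) : ∀ n s a, 2*a+2 ≤ s → s ≤ 2*a+2+n →
    FF e s a * (b (a+2) * b (s-a)) ≤ PHI b e s a := by
  intro n
  induction n with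
  | zero =>
    intro s a h1 h2
    have hs : s = 2*a+2 := by omega
    subst hs
    exact base_even e a
  | succ n ih =>
    intro s a h1 h2
    rcases (show s = 2*a+2 ∨ s = 2*a+3 ∨ 2*a+4 ≤ s by omega) with hs | hs | hs
    · subst hs; exact base_even e a
    · subst hs; exact base_odd e a
    · -- step
      obtain ⟨q, rfl⟩ : ∃ q, s = 2*a+4+q := ⟨s-(2*a+4), by omega⟩
      have hihq := ih (2*a+4+q) (a+1) (by omega) (by omega)
      have hFF1 : 0 ≤ FF e (2*a+4+q) (a+1) := FF_nonneg e (2*a+4+q) (a+1) (by omega)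
      have hQ : b (a+2) * b (a+q+4) ≤ b (a+3) * b (a+q+3) := by
        have := SL hb0 hlc hnz q (a+2)
        rw [show (a:ℕ)+2+q+2 = a+q+4 from by omega,
          show (a:ℕ)+2+q+1 = a+q+3 from by omega,
          show (a:ℕ)+2+1 = a+3 from rfl] at this
        exact this
      have hsubs : ∀ P : Prop, P → P := fun _ h => h
      -- rewrite PHI's and FF's ℕ-subtractions
      have hPHI1 : PHI b e (2*a+4+q) (a+1)
          = ∑ i ∈ Ico (a+2) (a+q+3), wL b e (2*a+4+q) i
            - ∑ i ∈ Ico (a+3) (a+q+4), wR b e (2*a+4+q) i := by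
        rw [PHI, show 2*a+4+q-(a+1) = a+q+3 from by omega,
          show 2*a+4+q+1-(a+1) = a+q+4 from by omega]
      have hPHI0 : PHI b e (2*a+4+q) a
          = PHI b e (2*a+4+q) (a+1)
            + (wL b e (2*a+4+q) (a+1) + wL b e (2*a+4+q) (a+q+3)
              - wR b e (2*a+4+q) (a+2) - wR b e (2*a+4+q) (a+q+4)) := by
        rw [PHI, show 2*a+4+q-a = a+q+4 from by omega,
          show 2*a+4+q+1-a = a+q+5 from by omega, hPHI1]
        rw [Finset.sum_eq_sum_Ico_succ_bot (by omega : a+1 < a+q+4) (wL b e (2*a+4+q)),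
          show (a:ℕ)+q+4 = (a+q+3)+1 from rfl,
          Finset.sum_Ico_succ_top (by omega : a+2 ≤ a+q+3) (wL b e (2*a+4+q)),
          Finset.sum_eq_sum_Ico_succ_bot (by omega : a+2 < a+q+5) (wR b e (2*a+4+q)),
          show (a:ℕ)+q+5 = (a+q+4)+1 from rfl,
          Finset.sum_Ico_succ_top (by omega : a+3 ≤ a+q+4) (wR b e (2*a+4+q))]
        ring
      have hK : wL b e (2*a+4+q) (a+1) + wL b e (2*a+4+q) (a+q+3)
            - wR b e (2*a+4+q) (a+2) - wR b e (2*a+4+q) (a+q+4)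
          = (FF e (2*a+4+q) a - FF e (2*a+4+q) (a+1)) * (b (a+2) * b (a+q+4)) := by
        simp only [wL, wR, FF,
          show 2*a+4+q - (a+1) = a+q+3 from by omega,
          show (a:ℕ)+1+1 = a+2 from rfl,
          show 2*a+4+q+1 - (a+1) = a+q+4 from by omega,
          show 2*a+4+q - (a+q+3) = a+1 from by omega,
          show (a:ℕ)+q+3+1 = a+q+4 from rfl,
          show 2*a+4+q+1 - (a+q+3) = a+2 from by omega,
          show 2*a+4+q - (a+2) = a+q+2 from by omega,
          show 2*a+4+q+2 - (a+2) = a+q+4 from by omega,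
          show 2*a+4+q - (a+q+4) = a from by omega,
          show 2*a+4+q+2 - (a+q+4) = a+2 from by omega,
          show 2*a+4+q - a - 1 = a+q+3 from by omega,
          show 2*a+4+q - a = a+q+4 from by omega,
          show (a:ℕ)+q+4-1 = a+q+3 from by omega,
          show 2*a+4+q - (a+1) - 1 = a+q+2 from by omega,
          show (a:ℕ)+q+3-1 = a+q+2 from by omega]
        linear_combination (b (a+2) * b (a+q+4)) * idS e a (a+q+2)
      have hmono : FF e (2*a+4+q) (a+1) * (b (a+2) * b (a+q+4))
          ≤ FF e (2*a+4+q) (a+1) * (b (a+1+2) * b (2*a+4+q-(a+1))) := by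
        rw [show 2*a+4+q-(a+1) = a+q+3 from by omega, show (a:ℕ)+1+2 = a+3 from rfl]
        exact mul_le_mul_of_nonneg_left hQ hFF1
      rw [show 2*a+4+q-a = a+q+4 from by omega]
      calc FF e (2*a+4+q) a * (b (a+2) * b (a+q+4))
          = FF e (2*a+4+q) (a+1) * (b (a+2) * b (a+q+4))
            + (FF e (2*a+4+q) a - FF e (2*a+4+q) (a+1)) * (b (a+2) * b (a+q+4)) := by ring
        _ ≤ PHI b e (2*a+4+q) (a+1)
            + (FF e (2*a+4+q) a - FF e (2*a+4+q) (a+1)) * (b (a+2) * b (a+q+4)) := by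
            linarith [le_trans hmono hihq]
        _ = PHI b e (2*a+4+q) a := by rw [hPHI0, hK]

include hb0 hlc hnz in
lemma KEY (e s : ℕ) :
    ∑ i ∈ range (s+1), wR b e s i ≤ ∑ i ∈ range (s+1), wL b e s i := by
  rcases s with _ | _ | t
  · simp only [Finset.range_one, Finset.sum_singleton, wL, wR]
    norm_num
    nlinarith [hlc 0, hb0 0, hb0 1, hb0 2]
  · simp only [Finset.sum_range_succ, Finset.sum_range_one, wL, wR]
    norm_num
    have hSL : b 0 * b 3 ≤ b 1 * b 2 := by
      have := SL hb0 hlc hnz 1 0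
      norm_num at this
      exact this
    have := mul_le_mul_of_nonneg_left hSL (Nat.cast_nonneg (α := ℝ) e)
    nlinarith [this]
  · have hclaim : FF e (t+2) 0 * (b 2 * b (t+2)) ≤ PHI b e (t+2) 0 := by
      have := claim hb0 hlc hnz e (t+2) (t+2) 0 (by omega) (by omega)
      norm_num at this
      exact this
    have hFF0 : 0 ≤ FF e (t+2) 0 := FF_nonneg e (t+2) 0 (by omega)
    have hQ21 : b 1 * b (t+3) ≤ b 2 * b (t+2) := by
      have := SL hb0 hlc hnz t 1
      rw [show (1:ℕ)+t+2 = t+3 from by omega, show (1:ℕ)+t+1 = t+2 from by omega] at this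
      norm_num at this
      exact this
    have hQ10 : b 0 * b (t+4) ≤ b 1 * b (t+3) := by
      have := SL hb0 hlc hnz (t+2) 0
      norm_num at this
      rw [show (t:ℕ)+2+2 = t+4 from rfl, show (t:ℕ)+2+1 = t+3 from rfl] at this
      exact this
    have hTL : ∑ i ∈ range (t+2+1), wL b e (t+2) i
        = wL b e (t+2) 0 + ∑ i ∈ Ico 1 (t+2), wL b e (t+2) i + wL b e (t+2) (t+2) := by
      rw [Finset.range_eq_Ico, Finset.sum_eq_sum_Ico_succ_bot (by omega : 0 < t+2+1),
        Finset.sum_Ico_succ_top (by omega : 1 ≤ t+2)]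
      ring
    have hTR : ∑ i ∈ range (t+2+1), wR b e (t+2) i
        = wR b e (t+2) 0 + wR b e (t+2) 1 + ∑ i ∈ Ico 2 (t+2+1), wR b e (t+2) i := by
      rw [Finset.range_eq_Ico, Finset.sum_eq_sum_Ico_succ_bot (by omega : 0 < t+2+1),
        Finset.sum_eq_sum_Ico_succ_bot (by omega : 1 < t+2+1)]
      ring
    have hPHI : PHI b e (t+2) 0
        = ∑ i ∈ Ico 1 (t+2), wL b e (t+2) i - ∑ i ∈ Ico 2 (t+2+1), wR b e (t+2) i := by
      rw [PHI]
      norm_num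
    have hwL0 : wL b e (t+2) 0 = ((e+1).choose (t+2) : ℝ) * (b 1 * b (t+3)) := by
      rw [wL, Nat.sub_zero, show t+2+1-0 = t+3 from by omega, Nat.choose_zero_right]
      push_cast; ring
    have hwLs : wL b e (t+2) (t+2) = ((e+1).choose (t+2) : ℝ) * (b 1 * b (t+3)) := by
      rw [wL, Nat.sub_self, show t+2+1-(t+2) = 1 from by omega, Nat.choose_zero_right,
        show (t:ℕ)+2+1 = t+3 from rfl]
      push_cast; ring
    have hwR0 : wR b e (t+2) 0 = (e.choose (t+2) : ℝ) * (b 0 * b (t+4)) := by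
      rw [wR, Nat.sub_zero, show t+2+2-0 = t+4 from by omega, Nat.choose_zero_right]
      push_cast; ring
    have hwR1 : wR b e (t+2) 1 = ((e:ℝ)+2) * (e.choose (t+1) : ℝ) * (b 1 * b (t+3)) := by
      rw [wR, show t+2-1 = t+1 from by omega, show t+2+2-1 = t+3 from by omega,
        Nat.choose_one_right]
      push_cast; ring
    have hid : FF e (t+2) 0 + 2*((e+1).choose (t+2) : ℝ) - ((e:ℝ)+2) * (e.choose (t+1) : ℝ)
        = (e.choose (t+2) : ℝ) := by
      rw [FF, show t+2-0-1 = t+1 from by omega, Nat.sub_zero, show (0:ℕ)+1 = 1 from rfl,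
        Nat.choose_one_right, Nat.choose_zero_right,
        show ((e+1).choose (t+2)) = e.choose (t+1) + e.choose (t+2) from
          Nat.choose_succ_succ e (t+1)]
      push_cast; ring
    have hmono1 : FF e (t+2) 0 * (b 1 * b (t+3)) ≤ FF e (t+2) 0 * (b 2 * b (t+2)) :=
      mul_le_mul_of_nonneg_left hQ21 hFF0
    have hmono0 : (e.choose (t+2) : ℝ) * (b 0 * b (t+4))
        ≤ (e.choose (t+2) : ℝ) * (b 1 * b (t+3)) :=
      mul_le_mul_of_nonneg_left hQ10 (Nat.cast_nonneg _)
    have hprod : FF e (t+2) 0 * (b 1 * b (t+3)) + 2*((e+1).choose (t+2) : ℝ) * (b 1 * b (t+3))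
          - ((e:ℝ)+2) * (e.choose (t+1) : ℝ) * (b 1 * b (t+3))
        = (e.choose (t+2) : ℝ) * (b 1 * b (t+3)) := by
      linear_combination (b 1 * b (t+3)) * hid
    rw [hTL, hTR, hwL0, hwLs, hwR0, hwR1]
    linarith [hclaim, hmono1, hmono0, hprod, hPHI.symm.le, hPHI.le]

end Claim

noncomputable def PP (c : ℕ → ℝ) (N : ℕ) : Polynomial ℝ := ∑ j ∈ range N, Polynomial.monomial j (c j)

lemma PP_coeff (c : ℕ → ℝ) (N : ℕ) (hc : ∀ i, N ≤ i → c i = 0) (i : ℕ) :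
    (PP c N).coeff i = c i := by
  rw [PP, Polynomial.finset_sum_coeff]
  simp only [Polynomial.coeff_monomial]
  rw [Finset.sum_ite_eq' (range N) i c]
  by_cases h : i ∈ range N
  · simp [h]
  · simp [h, hc i (by simpa using h)]

lemma PP_natDegree (c : ℕ → ℝ) (N : ℕ) : (PP c N).natDegree ≤ N := by
  apply Polynomial.natDegree_sum_le_of_forall_le
  intro i hi
  exact le_trans (Polynomial.natDegree_monomial_le (c i)) (le_of_lt (Finset.mem_range.mp hi))

lemma PP_eval_one (c : ℕ → ℝ) (N : ℕ) : (PP c N).eval 1 = ∑ j ∈ range N, c j := by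
  rw [PP]
  simp [Polynomial.eval_finset_sum, Polynomial.eval_monomial]

lemma mul_eval_one (c c' : ℕ → ℝ) (N : ℕ) (hc : ∀ i, N ≤ i → c i = 0)
    (hc' : ∀ i, N ≤ i → c' i = 0) :
    (∑ j ∈ range N, c j) * (∑ j ∈ range N, c' j)
      = ∑ s ∈ range (2*N+1), ∑ k ∈ range (s+1), c k * c' (s-k) := by
  rw [← PP_eval_one c N, ← PP_eval_one c' N, ← Polynomial.eval_mul]
  have hdeg : ((PP c N) * (PP c' N)).natDegree < 2*N+1 := by
    refine lt_of_le_of_lt (Polynomial.natDegree_mul_le) ?_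
    have h1 := PP_natDegree c N
    have h2 := PP_natDegree c' N
    omega
  rw [Polynomial.eval_eq_sum_range' hdeg]
  refine Finset.sum_congr rfl fun s _ => ?_
  rw [one_pow, mul_one, Polynomial.coeff_mul, Finset.Nat.sum_antidiagonal_eq_sum_range_succ_mk]
  refine Finset.sum_congr rfl fun k _ => ?_
  rw [PP_coeff c N hc, PP_coeff c' N hc']

section Tineq
variable {b : ℕ → ℝ}
  (hb0 : ∀ k, 0 ≤ b k)
  (hlc : ∀ k, b k * b (k+2) ≤ b (k+1)^2)
  (hnz : ∀ p q r, p < q → q < r → 0 < b p → 0 < b r → 0 < b q)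

include hb0 hlc hnz in
lemma Tineq (e : ℕ) :
    (∑ j ∈ range (e+3), ((e+2).choose j : ℝ) * b j)
      * (∑ j ∈ range (e+1), (e.choose j : ℝ) * b (j+2))
    ≤ (∑ j ∈ range (e+2), ((e+1).choose j : ℝ) * b (j+1))
      * (∑ j ∈ range (e+2), ((e+1).choose j : ℝ) * b (j+1)) := by
  set c0 : ℕ → ℝ := fun j => ((e+2).choose j : ℝ) * b j with hc0
  set c1 : ℕ → ℝ := fun j => ((e+1).choose j : ℝ) * b (j+1) with hc1
  set c2 : ℕ → ℝ := fun j => (e.choose j : ℝ) * b (j+2) with hc2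
  have z0 : ∀ i, e+3 ≤ i → c0 i = 0 := by
    intro i hi; simp [hc0, Nat.choose_eq_zero_of_lt (by omega : e+2 < i)]
  have z1 : ∀ i, e+3 ≤ i → c1 i = 0 := by
    intro i hi; simp [hc1, Nat.choose_eq_zero_of_lt (by omega : e+1 < i)]
  have z2 : ∀ i, e+3 ≤ i → c2 i = 0 := by
    intro i hi; simp [hc2, Nat.choose_eq_zero_of_lt (by omega : e < i)]
  have ext1 : ∑ j ∈ range (e+2), c1 j = ∑ j ∈ range (e+3), c1 j := by
    rw [Finset.sum_range_succ (f := c1) (n := e+2)]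
    simp [hc1, Nat.choose_eq_zero_of_lt (by omega : e+1 < e+2)]
  have ext2 : ∑ j ∈ range (e+1), c2 j = ∑ j ∈ range (e+3), c2 j := by
    rw [Finset.sum_range_succ (f := c2) (n := e+2), Finset.sum_range_succ (f := c2) (n := e+1)]
    simp [hc2, Nat.choose_eq_zero_of_lt (by omega : e < e+1),
      Nat.choose_eq_zero_of_lt (by omega : e < e+2)]
  rw [ext1, ext2, mul_eval_one c0 c2 (e+3) z0 z2, mul_eval_one c1 c1 (e+3) z1 z1]
  apply Finset.sum_le_sum
  intro s _
  have eR : ∑ k ∈ range (s+1), c0 k * c2 (s-k) = ∑ k ∈ range (s+1), wR b e s k := by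
    refine Finset.sum_congr rfl fun k hk => ?_
    have hks : k ≤ s := by simpa [Nat.lt_succ_iff] using Finset.mem_range.mp hk
    simp only [hc0, hc2, wR]
    rw [show s-k+2 = s+2-k from by omega]
    ring
  have eL : ∑ k ∈ range (s+1), c1 k * c1 (s-k) = ∑ k ∈ range (s+1), wL b e s k := by
    refine Finset.sum_congr rfl fun k hk => ?_
    have hks : k ≤ s := by simpa [Nat.lt_succ_iff] using Finset.mem_range.mp hk
    simp only [hc1, wL]
    rw [show s-k+1 = s+1-k from by omega]
    ring
  rw [eR, eL]
  exact KEY hb0 hlc hnz e s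

end Tineq

/-- The key sequence-level inequality. -/
lemma CORE (d : ℕ) (u : ℕ → ℝ)
    (hu0 : ∀ k, k ≤ d → 0 ≤ u k)
    (hulc : ∀ k, 0 < k → k < d →
      (u (k - 1) / (d.choose (k - 1) : ℝ)) * (u (k + 1) / (d.choose (k + 1) : ℝ)) ≤
        (u k / (d.choose k : ℝ)) ^ 2)
    (hniz : ∀ k₁ k₂ k₃, k₁ < k₂ → k₂ < k₃ → k₃ ≤ d → 0 < u k₁ * u k₃ → 0 < u k₂) :
    (∑ k ∈ range (d+1), u k) * (∑ k ∈ range (d+1), (k:ℝ) * ((k-1 : ℕ) : ℝ) * u k)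
      ≤ (∑ k ∈ range (d+1), (k:ℝ) * u k) ^ 2 := by
  rcases d with _ | _ | e
  · simp
  · norm_num [Finset.sum_range_succ]
    nlinarith [sq_nonneg (u 1)]
  · -- d = e+2
    set d := e+2 with hd
    set b : ℕ → ℝ := fun k => if k ≤ d then u k / (d.choose k : ℝ) else 0 with hbdef
    have hCpos : ∀ k, k ≤ d → (0:ℝ) < (d.choose k : ℝ) := fun k hk => by
      exact_mod_cast Nat.choose_pos hk
    have hb0 : ∀ k, 0 ≤ b k := by
      intro k
      simp only [hbdef]
      split
      · exact div_nonneg (hu0 k (by assumption)) (Nat.cast_nonneg _)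
      · exact le_refl 0
    have hbu : ∀ k, k ≤ d → u k = (d.choose k : ℝ) * b k := by
      intro k hk
      simp only [hbdef, if_pos hk]
      rw [mul_div_cancel₀]
      exact (hCpos k hk).ne'
    have hlc : ∀ k, b k * b (k+2) ≤ b (k+1)^2 := by
      intro k
      by_cases h2 : k+2 ≤ d
      · have h0 : k ≤ d := by omega
        have h1 : k+1 ≤ d := by omega
        have := hulc (k+1) (by omega) (by omega)
        rw [Nat.add_sub_cancel] at this
        simp only [hbdef, if_pos h0, if_pos h1, if_pos h2]
        exact this
      · have : b (k+2) = 0 := by simp only [hbdef, if_neg h2]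
        rw [this, mul_zero]
        exact sq_nonneg _
    have hnz : ∀ p q r, p < q → q < r → 0 < b p → 0 < b r → 0 < b q := by
      intro p q r hpq hqr hbp hbr
      have hpd : p ≤ d := by
        by_contra h
        simp only [hbdef, if_neg h] at hbp
        exact lt_irrefl _ hbp
      have hrd : r ≤ d := by
        by_contra h
        simp only [hbdef, if_neg h] at hbr
        exact lt_irrefl _ hbr
      simp only [hbdef, if_pos hpd, if_pos hrd] at hbp hbr
      have hup : 0 < u p := by
        rcases div_pos_iff.mp hbp with ⟨h, _⟩ | ⟨_, h⟩
        · exact h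
        · exact absurd h (not_lt.mpr (Nat.cast_nonneg _))
      have hur : 0 < u r := by
        rcases div_pos_iff.mp hbr with ⟨h, _⟩ | ⟨_, h⟩
        · exact h
        · exact absurd h (not_lt.mpr (Nat.cast_nonneg _))
      have := hniz p q r hpq hqr hrd (mul_pos hup hur)
      simp only [hbdef, if_pos (by omega : q ≤ d)]
      exact div_pos this (hCpos q (by omega))
    -- rewrite the three sums
    have S0 : ∑ k ∈ range (d+1), u k = ∑ k ∈ range (e+3), (d.choose k : ℝ) * b k := by
      refine Finset.sum_congr rfl fun k hk => ?_
      exact hbu k (by simpa [Nat.lt_succ_iff] using Finset.mem_range.mp hk)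
    have S1 : ∑ k ∈ range (d+1), (k:ℝ) * u k
        = ((e:ℝ)+2) * ∑ j ∈ range (e+2), ((e+1).choose j : ℝ) * b (j+1) := by
      rw [Finset.sum_range_succ' (fun k => (k:ℝ) * u k) (e+2)]
      rw [Finset.mul_sum]
      norm_num
      refine Finset.sum_congr rfl fun j hj => ?_
      have hjd : j+1 ≤ d := by
        have := Finset.mem_range.mp hj; omega
      rw [hbu (j+1) hjd]
      have hnat : ((j+1) * d.choose (j+1) : ℕ) = ((e+2) * (e+1).choose j : ℕ) := by
        have h := Nat.add_one_mul_choose_eq (e+1) j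
        simp only [Nat.succ_eq_add_one, show e+1+1 = e+2 from rfl] at h
        exact (mul_comm _ _).trans h.symm
      have : ((j:ℝ)+1) * (d.choose (j+1) : ℝ) = ((e:ℝ)+2) * ((e+1).choose j : ℝ) := by
        exact_mod_cast congrArg (Nat.cast (R := ℝ)) hnat
      calc ((j:ℝ)+1) * ((d.choose (j+1) : ℝ) * b (j+1))
          = (((j:ℝ)+1) * (d.choose (j+1) : ℝ)) * b (j+1) := by ring
        _ = (((e:ℝ)+2) * ((e+1).choose j : ℝ)) * b (j+1) := by rw [this]
        _ = ((e:ℝ)+2) * (((e+1).choose j : ℝ) * b (j+1)) := by ring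
    have S2 : ∑ k ∈ range (d+1), (k:ℝ) * ((k-1 : ℕ) : ℝ) * u k
        = ((e:ℝ)+2) * ((e:ℝ)+1) * ∑ j ∈ range (e+1), (e.choose j : ℝ) * b (j+2) := by
      rw [Finset.sum_range_succ' (fun k => (k:ℝ) * ((k-1 : ℕ) : ℝ) * u k) (e+2)]
      rw [Finset.sum_range_succ' (fun j => ((j+1:ℕ):ℝ) * ((j+1-1 : ℕ) : ℝ) * u (j+1)) (e+1)]
      rw [Finset.mul_sum]
      norm_num
      refine Finset.sum_congr rfl fun j hj => ?_
      have hjd : j+2 ≤ d := by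
        have := Finset.mem_range.mp hj; omega
      rw [hbu (j+2) hjd]
      have hnat : ((j+2) * ((j+1) * d.choose (j+2)) : ℕ)
          = ((e+2) * ((e+1) * e.choose j) : ℕ) := by
        have h1 := Nat.add_one_mul_choose_eq (e+1) (j+1)
        have h2 := Nat.add_one_mul_choose_eq e j
        calc (j+2) * ((j+1) * d.choose (j+2)) = (j+1) * ((e+2).choose (j+2) * (j+2)) := by
              rw [hd]; ring
          _ = (j+1) * ((e+2) * (e+1).choose (j+1)) := by rw [← h1]
          _ = (e+2) * ((e+1).choose (j+1) * (j+1)) := by ring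
          _ = (e+2) * ((e+1) * e.choose j) := by rw [← h2]
      have hcast : ((j:ℝ)+2) * (((j:ℝ)+1) * (d.choose (j+2) : ℝ))
          = ((e:ℝ)+2) * (((e:ℝ)+1) * (e.choose j : ℝ)) := by
        exact_mod_cast congrArg (Nat.cast (R := ℝ)) hnat
      calc ((j:ℝ)+1+1) * ((j:ℝ)+1) * ((d.choose (j+2) : ℝ) * b (j+2))
          = (((j:ℝ)+2) * (((j:ℝ)+1) * (d.choose (j+2) : ℝ))) * b (j+2) := by ring
        _ = (((e:ℝ)+2) * (((e:ℝ)+1) * (e.choose j : ℝ))) * b (j+2) := by rw [hcast]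
        _ = ((e:ℝ)+2) * ((e:ℝ)+1) * ((e.choose j : ℝ) * b (j+2)) := by ring
    rw [S0, S1, S2]
    have hdchoose : ∀ k, d.choose k = (e+2).choose k := fun k => rfl
    simp only [hdchoose]
    have hT := Tineq hb0 hlc hnz e
    have hT0 : 0 ≤ ∑ k ∈ range (e+3), ((e+2).choose k : ℝ) * b k :=
      Finset.sum_nonneg fun k _ => mul_nonneg (Nat.cast_nonneg _) (hb0 k)
    have hT2 : 0 ≤ ∑ j ∈ range (e+1), (e.choose j : ℝ) * b (j+2) :=
      Finset.sum_nonneg fun k _ => mul_nonneg (Nat.cast_nonneg _) (hb0 _)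
    have hT1sq : 0 ≤ (∑ j ∈ range (e+2), ((e+1).choose j : ℝ) * b (j+1))
        * (∑ j ∈ range (e+2), ((e+1).choose j : ℝ) * b (j+1)) := le_trans (mul_nonneg hT0 hT2) hT
    set A := ∑ k ∈ range (e+3), ((e+2).choose k : ℝ) * b k with hA
    set B := ∑ j ∈ range (e+2), ((e+1).choose j : ℝ) * b (j+1) with hB
    set Cc := ∑ j ∈ range (e+1), (e.choose j : ℝ) * b (j+2) with hCc
    have key : ((e:ℝ)+2)*((e:ℝ)+1)*(A*Cc) ≤ ((e:ℝ)+2)*((e:ℝ)+1)*(B*B) :=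
      mul_le_mul_of_nonneg_left hT (by positivity)
    have key2 : ((e:ℝ)+2)*((e:ℝ)+1)*(B*B) ≤ (((e:ℝ)+2)*((e:ℝ)+2))*(B*B) := by
      nlinarith [hT1sq]
    calc A * (((e:ℝ)+2)*((e:ℝ)+1)*Cc) = ((e:ℝ)+2)*((e:ℝ)+1)*(A*Cc) := by ring
      _ ≤ ((e:ℝ)+2)*((e:ℝ)+1)*(B*B) := key
      _ ≤ (((e:ℝ)+2)*((e:ℝ)+2))*(B*B) := key2
      _ = (((e:ℝ)+2)*B)^2 := by ring

lemma EASY (d : ℕ) (u : ℕ → ℝ) (hu0 : ∀ k, k ≤ d → 0 ≤ u k) :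
    (∑ k ∈ range (d+1), u k) * (∑ k ∈ range (d+1), (k:ℝ) * ((d-k : ℕ) : ℝ) * u k)
      ≤ (∑ k ∈ range (d+1), (k:ℝ) * u k) * (∑ k ∈ range (d+1), ((d-k : ℕ) : ℝ) * u k) := by
  have e1 : ∑ k ∈ range (d+1), ((d-k : ℕ) : ℝ) * u k
      = (d:ℝ) * (∑ k ∈ range (d+1), u k) - ∑ k ∈ range (d+1), (k:ℝ) * u k := by
    rw [Finset.mul_sum, ← Finset.sum_sub_distrib]
    refine Finset.sum_congr rfl fun k hk => ?_
    have hkd : k ≤ d := by simpa [Nat.lt_succ_iff] using Finset.mem_range.mp hk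
    rw [Nat.cast_sub hkd]
    ring
  have e2 : ∑ k ∈ range (d+1), (k:ℝ) * ((d-k : ℕ) : ℝ) * u k
      = (d:ℝ) * (∑ k ∈ range (d+1), (k:ℝ) * u k)
        - ∑ k ∈ range (d+1), (k:ℝ)^2 * u k := by
    rw [Finset.mul_sum, ← Finset.sum_sub_distrib]
    refine Finset.sum_congr rfl fun k hk => ?_
    have hkd : k ≤ d := by simpa [Nat.lt_succ_iff] using Finset.mem_range.mp hk
    rw [Nat.cast_sub hkd]
    ring
  have hCS : (∑ k ∈ range (d+1), (k:ℝ) * u k)^2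
      ≤ (∑ k ∈ range (d+1), u k) * ∑ k ∈ range (d+1), (k:ℝ)^2 * u k := by
    have h := Finset.sum_mul_sq_le_sq_mul_sq (range (d+1))
      (fun k => Real.sqrt (u k)) (fun k => (k:ℝ) * Real.sqrt (u k))
    have c1 : ∑ k ∈ range (d+1), Real.sqrt (u k) * ((k:ℝ) * Real.sqrt (u k))
        = ∑ k ∈ range (d+1), (k:ℝ) * u k := by
      refine Finset.sum_congr rfl fun k hk => ?_
      have hkd : k ≤ d := by simpa [Nat.lt_succ_iff] using Finset.mem_range.mp hk
      rw [show Real.sqrt (u k) * ((k:ℝ) * Real.sqrt (u k))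
          = (k:ℝ) * (Real.sqrt (u k) * Real.sqrt (u k)) from by ring,
        Real.mul_self_sqrt (hu0 k hkd)]
    have c2 : ∑ k ∈ range (d+1), Real.sqrt (u k)^2 = ∑ k ∈ range (d+1), u k := by
      refine Finset.sum_congr rfl fun k hk => ?_
      have hkd : k ≤ d := by simpa [Nat.lt_succ_iff] using Finset.mem_range.mp hk
      exact Real.sq_sqrt (hu0 k hkd)
    have c3 : ∑ k ∈ range (d+1), ((k:ℝ) * Real.sqrt (u k))^2
        = ∑ k ∈ range (d+1), (k:ℝ)^2 * u k := by
      refine Finset.sum_congr rfl fun k hk => ?_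
      have hkd : k ≤ d := by simpa [Nat.lt_succ_iff] using Finset.mem_range.mp hk
      rw [mul_pow, Real.sq_sqrt (hu0 k hkd)]
    rw [c1, c2, c3] at h
    exact h
  rw [e1, e2]
  nlinarith [hCS]

lemma pos_factors {p q r : ℝ} (hp : 0 ≤ p) (hq : 0 ≤ q) (hr : 0 ≤ r) (h : 0 < p*q*r) :
    0 < p ∧ 0 < q ∧ 0 < r := by
  refine ⟨?_, ?_, ?_⟩
  · rcases eq_or_lt_of_le hp with h' | h'
    · rw [← h'] at h; simp at h
    · exact h'
  · rcases eq_or_lt_of_le hq with h' | h'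
    · rw [← h'] at h; simp at h
    · exact h'
  · rcases eq_or_lt_of_le hr with h' | h'
    · rw [← h'] at h; simp at h
    · exact h'

lemma CORE_rev (d : ℕ) (u : ℕ → ℝ)
    (hu0 : ∀ k, k ≤ d → 0 ≤ u k)
    (hulc : ∀ k, 0 < k → k < d →
      (u (k - 1) / (d.choose (k - 1) : ℝ)) * (u (k + 1) / (d.choose (k + 1) : ℝ)) ≤
        (u k / (d.choose k : ℝ)) ^ 2)
    (hniz : ∀ k₁ k₂ k₃, k₁ < k₂ → k₂ < k₃ → k₃ ≤ d → 0 < u k₁ * u k₃ → 0 < u k₂) :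
    (∑ k ∈ range (d+1), u k)
        * (∑ k ∈ range (d+1), ((d-k : ℕ) : ℝ) * ((d-k-1 : ℕ) : ℝ) * u k)
      ≤ (∑ k ∈ range (d+1), ((d-k : ℕ) : ℝ) * u k) ^ 2 := by
  set v : ℕ → ℝ := fun k => u (d - k) with hv
  have hv0 : ∀ k, k ≤ d → 0 ≤ v k := fun k hk => hu0 (d-k) (by omega)
  have hvulc : ∀ k, 0 < k → k < d →
      (v (k - 1) / (d.choose (k - 1) : ℝ)) * (v (k + 1) / (d.choose (k + 1) : ℝ)) ≤
        (v k / (d.choose k : ℝ)) ^ 2 := by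
    intro k hk0 hkd
    have e1 : d-(k-1) = (d-k)+1 := by omega
    have e2 : d-(k+1) = (d-k)-1 := by omega
    have hc1 : d.choose (k-1) = d.choose ((d-k)+1) := by
      rw [← e1]; exact (Nat.choose_symm (by omega)).symm
    have hc2 : d.choose (k+1) = d.choose ((d-k)-1) := by
      rw [← e2]; exact (Nat.choose_symm (by omega)).symm
    have hc0 : d.choose k = d.choose (d-k) := (Nat.choose_symm (by omega)).symm
    have hx := hulc (d-k) (by omega) (by omega)
    simp only [hv]
    rw [e1, e2, hc1, hc2, hc0]
    calc u ((d-k)+1) / (d.choose ((d-k)+1) : ℝ) * (u ((d-k)-1) / (d.choose ((d-k)-1) : ℝ))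
        = u ((d-k)-1) / (d.choose ((d-k)-1) : ℝ) * (u ((d-k)+1) / (d.choose ((d-k)+1) : ℝ)) := by
          ring
      _ ≤ (u (d-k) / (d.choose (d-k) : ℝ))^2 := hx
  have hvniz : ∀ k₁ k₂ k₃, k₁ < k₂ → k₂ < k₃ → k₃ ≤ d → 0 < v k₁ * v k₃ → 0 < v k₂ := by
    intro k1 k2 k3 h12 h23 h3d hpos
    simp only [hv] at hpos ⊢
    exact hniz (d-k3) (d-k2) (d-k1) (by omega) (by omega) (by omega)
      (by rw [mul_comm]; exact hpos)
  have hC := CORE d v hv0 hvulc hvniz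
  have r0 : ∑ k ∈ range (d+1), v k = ∑ k ∈ range (d+1), u k := by
    rw [← Finset.sum_range_reflect v (d+1)]
    refine Finset.sum_congr rfl fun j hj => ?_
    have hjd : j ≤ d := by simpa [Nat.lt_succ_iff] using Finset.mem_range.mp hj
    simp only [hv]
    congr 1
    omega
  have r1 : ∑ k ∈ range (d+1), (k:ℝ) * v k
      = ∑ k ∈ range (d+1), ((d-k : ℕ) : ℝ) * u k := by
    rw [← Finset.sum_range_reflect (fun k => (k:ℝ) * v k) (d+1)]
    refine Finset.sum_congr rfl fun j hj => ?_
    have hjd : j ≤ d := by simpa [Nat.lt_succ_iff] using Finset.mem_range.mp hj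
    simp only [hv]
    rw [show d+1-1-j = d-j from by omega, show d-(d-j) = j from by omega]
  have r2 : ∑ k ∈ range (d+1), (k:ℝ) * ((k-1 : ℕ) : ℝ) * v k
      = ∑ k ∈ range (d+1), ((d-k : ℕ) : ℝ) * ((d-k-1 : ℕ) : ℝ) * u k := by
    rw [← Finset.sum_range_reflect (fun k => (k:ℝ) * ((k-1 : ℕ) : ℝ) * v k) (d+1)]
    refine Finset.sum_congr rfl fun j hj => ?_
    have hjd : j ≤ d := by simpa [Nat.lt_succ_iff] using Finset.mem_range.mp hj
    simp only [hv]
    rw [show d+1-1-j = d-j from by omega, show d-(d-j) = j from by omega]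
  rw [← r0, ← r1, ← r2]
  exact hC

lemma two_mul_le_sq {x y z : ℝ} {n : ℕ}
    (h : x * (z / (((n+2).choose 2 : ℕ) : ℝ)) ≤ (y / ((n:ℝ)+2))^2) : 2*(x*z) ≤ y^2 := by
  have hC2n : (n+2).choose 2 * 2 = (n+2)*(n+1) := by
    have h2 := Nat.add_one_mul_choose_eq (n+1) 1
    simp only [Nat.succ_eq_add_one, Nat.choose_one_right] at h2
    norm_num at h2
    exact h2.symm
  have hC2 : ((n+2).choose 2 : ℝ) * 2 = ((n:ℝ)+2)*((n:ℝ)+1) := by exact_mod_cast hC2n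
  have hC2pos : (0:ℝ) < ((n+2).choose 2 : ℝ) := by exact_mod_cast Nat.choose_pos (by omega)
  have hn2 : (0:ℝ) < (n:ℝ)+2 := by positivity
  rw [mul_div_assoc' x z _, div_pow, div_le_div_iff₀ hC2pos (by positivity)] at h
  nlinarith [h, hC2, mul_nonneg (sq_nonneg y) (le_of_lt hn2), hn2, sq_nonneg y]

end Stmt19Aux

open MvPolynomial Stmt19Aux

set_option maxHeartbeats 4000000 in
theorem stmt19 {d : ℕ} (a : ℕ → ℝ) (hnn : ∀ k, k ≤ d → 0 ≤ a k)
    (hulc : ∀ k, 0 < k → k < d →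
      (a (k - 1) / (d.choose (k - 1) : ℝ)) * (a (k + 1) / (d.choose (k + 1) : ℝ)) ≤
        (a k / (d.choose k : ℝ)) ^ 2)
    (hniz : ∀ k₁ k₂ k₃, k₁ < k₂ → k₂ < k₃ → k₃ ≤ d → 0 < a k₁ * a k₃ → 0 < a k₂)
    (f : MvPolynomial (Fin 2) ℝ)
    (hfa : f = ∑ k ∈ Finset.range (d + 1), C (a k) * X 0 ^ k * X 1 ^ (d - k)) :
    ∀ w : Fin 2 → ℝ, (∀ k, 0 ≤ w k) →
      (eval w f * eval w (pderiv 0 (pderiv 1 f)) ≤ eval w (pderiv 0 f) * eval w (pderiv 1 f)) ∧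
      ∀ i : Fin 2, eval w f * eval w (pderiv i (pderiv i f)) ≤ (eval w (pderiv i f)) ^ 2 := by
  intro w hw
  have hx0 : 0 ≤ w 0 := hw 0
  have hy0 : 0 ≤ w 1 := hw 1
  have hA : eval w f = ∑ k ∈ Finset.range (d+1), a k * w 0 ^ k * w 1 ^ (d-k) := by
    rw [hfa, map_sum]
    refine Finset.sum_congr rfl fun k hk => ?_
    simp
  have hBx : eval w (pderiv 0 f)
      = ∑ k ∈ Finset.range (d+1), (k:ℝ) * a k * w 0 ^ (k-1) * w 1 ^ (d-k) := by
    rw [hfa, map_sum, map_sum]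
    refine Finset.sum_congr rfl fun k hk => ?_
    simp [pderiv_mul, pderiv_pow, pderiv_X_self, pderiv_X_of_ne, pderiv_C]
    ring
  have hBy : eval w (pderiv 1 f)
      = ∑ k ∈ Finset.range (d+1), ((d-k : ℕ) : ℝ) * a k * w 0 ^ k * w 1 ^ (d-k-1) := by
    rw [hfa, map_sum, map_sum]
    refine Finset.sum_congr rfl fun k hk => ?_
    simp [pderiv_mul, pderiv_pow, pderiv_X_self, pderiv_X_of_ne, pderiv_C]
    ring
  have hCxy : eval w (pderiv 0 (pderiv 1 f))
      = ∑ k ∈ Finset.range (d+1),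
          (k:ℝ) * ((d-k : ℕ) : ℝ) * a k * w 0 ^ (k-1) * w 1 ^ (d-k-1) := by
    rw [hfa, map_sum, map_sum, map_sum]
    refine Finset.sum_congr rfl fun k hk => ?_
    simp [pderiv_mul, pderiv_pow, pderiv_X_self, pderiv_X_of_ne, pderiv_C]
    ring
  have hCxx : eval w (pderiv 0 (pderiv 0 f))
      = ∑ k ∈ Finset.range (d+1),
          (k:ℝ) * ((k-1 : ℕ) : ℝ) * a k * w 0 ^ (k-2) * w 1 ^ (d-k) := by
    rw [hfa, map_sum, map_sum, map_sum]
    refine Finset.sum_congr rfl fun k hk => ?_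
    simp [pderiv_mul, pderiv_pow, pderiv_X_self, pderiv_X_of_ne, pderiv_C]
    rcases k with _|k
    · simp
    · simp only [Nat.add_sub_cancel]
      ring_nf
      rcases k with _|k
      · simp
      · simp only [Nat.add_sub_cancel]
        ring_nf
        rw [show (2:ℕ)+k-2 = k from by omega]
  have hCyy : eval w (pderiv 1 (pderiv 1 f))
      = ∑ k ∈ Finset.range (d+1),
          ((d-k : ℕ) : ℝ) * ((d-k-1 : ℕ) : ℝ) * a k * w 0 ^ k * w 1 ^ (d-k-2) := by
    rw [hfa, map_sum, map_sum, map_sum]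
    refine Finset.sum_congr rfl fun k hk => ?_
    simp [pderiv_mul, pderiv_pow, pderiv_X_self, pderiv_X_of_ne, pderiv_C]
    rw [show d-k-1-1 = d-k-2 from by omega]
    ring
  rcases d with _ | m
  · -- d = 0 : all derivatives vanish
    constructor
    · rw [hBx, hBy, hCxy]
      simp [Finset.sum_range_one]
    · intro i
      fin_cases i
      · show eval w f * eval w (pderiv 0 (pderiv 0 f)) ≤ (eval w (pderiv 0 f))^2
        rw [hBx, hCxx]
        simp [Finset.sum_range_one]
      · show eval w f * eval w (pderiv 1 (pderiv 1 f)) ≤ (eval w (pderiv 1 f))^2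
        rw [hBy, hCyy]
        simp [Finset.sum_range_one]
  · -- d = m+1
    obtain ⟨u, hu⟩ : ∃ u : ℕ → ℝ, u = fun k => a k * w 0 ^ k * w 1 ^ (m+1-k) := ⟨_, rfl⟩
    have hu0 : ∀ k, k ≤ m+1 → 0 ≤ u k := by
      intro k hk
      rw [hu]
      exact mul_nonneg (mul_nonneg (hnn k hk) (pow_nonneg hx0 _)) (pow_nonneg hy0 _)
    have huulc : ∀ k, 0 < k → k < m+1 →
        (u (k - 1) / ((m+1).choose (k - 1) : ℝ)) * (u (k + 1) / ((m+1).choose (k + 1) : ℝ)) ≤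
          (u k / ((m+1).choose k : ℝ)) ^ 2 := by
      intro k hk0 hkd
      have e1 : w 0^(k-1) * w 0^(k+1) = (w 0^k)^2 := by
        rw [← pow_add, ← pow_mul]
        congr 1
        omega
      have e2 : w 1^(m+1-(k-1)) * w 1^(m+1-(k+1)) = (w 1^(m+1-k))^2 := by
        rw [← pow_add, ← pow_mul]
        congr 1
        omega
      calc (u (k-1) / ((m+1).choose (k-1) : ℝ)) * (u (k+1) / ((m+1).choose (k+1) : ℝ))
          = ((a (k-1) / ((m+1).choose (k-1) : ℝ)) * (a (k+1) / ((m+1).choose (k+1) : ℝ)))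
            * ((w 0^(k-1) * w 0^(k+1)) * (w 1^(m+1-(k-1)) * w 1^(m+1-(k+1)))) := by
            rw [hu]; ring
        _ = ((a (k-1) / ((m+1).choose (k-1) : ℝ)) * (a (k+1) / ((m+1).choose (k+1) : ℝ)))
            * ((w 0^k)^2 * (w 1^(m+1-k))^2) := by rw [e1, e2]
        _ ≤ (a k / ((m+1).choose k : ℝ))^2 * ((w 0^k)^2 * (w 1^(m+1-k))^2) := by
            apply mul_le_mul_of_nonneg_right (hulc k hk0 hkd)
            positivity
        _ = (u k / ((m+1).choose k : ℝ))^2 := by rw [hu]; ring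
    have huniz : ∀ k₁ k₂ k₃, k₁ < k₂ → k₂ < k₃ → k₃ ≤ m+1 → 0 < u k₁ * u k₃ → 0 < u k₂ := by
      intro k1 k2 k3 h12 h23 h3d hpos
      have hu1 : 0 < u k1 := by
        rcases mul_pos_iff.mp hpos with ⟨h, _⟩ | ⟨_, h⟩
        · exact h
        · exact absurd h (not_lt.mpr (hu0 k3 h3d))
      have hu3 : 0 < u k3 := by
        rcases mul_pos_iff.mp hpos with ⟨_, h⟩ | ⟨h, _⟩
        · exact h
        · exact absurd h (not_lt.mpr (hu0 k1 (by omega)))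
      rw [hu] at hu1 hu3 ⊢
      obtain ⟨ha1, hp1, hq1⟩ := pos_factors (hnn k1 (by omega)) (pow_nonneg hx0 _)
        (pow_nonneg hy0 _) hu1
      obtain ⟨ha3, hp3, hq3⟩ := pos_factors (hnn k3 h3d) (pow_nonneg hx0 _)
        (pow_nonneg hy0 _) hu3
      have hxpos : 0 < w 0 := by
        by_contra hcon
        have : w 0 = 0 := le_antisymm (not_lt.mp hcon) hx0
        rw [this, zero_pow (by omega : k3 ≠ 0)] at hp3
        exact lt_irrefl _ hp3
      have hypos : 0 < w 1 := by
        by_contra hcon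
        have : w 1 = 0 := le_antisymm (not_lt.mp hcon) hy0
        rw [this, zero_pow (by omega : m+1-k1 ≠ 0)] at hq1
        exact lt_irrefl _ hq1
      have ha2 := hniz k1 k2 k3 h12 h23 h3d (mul_pos ha1 ha3)
      positivity
    have tA : ∑ k ∈ Finset.range (m+2), a k * w 0 ^ k * w 1 ^ (m+1-k)
        = ∑ k ∈ Finset.range (m+2), u k := by
      refine Finset.sum_congr rfl fun k _ => ?_
      rw [hu]
    have t2 : (∑ k ∈ Finset.range (m+2), (k:ℝ) * a k * w 0 ^ (k-1) * w 1 ^ (m+1-k)) * w 0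
        = ∑ k ∈ Finset.range (m+2), (k:ℝ) * u k := by
      rw [Finset.sum_mul]
      refine Finset.sum_congr rfl fun k _ => ?_
      rcases k with _|k
      · simp
      · simp only [hu]
        simp only [Nat.add_sub_cancel]
        rw [pow_succ]
        ring
    have t3 : (∑ k ∈ Finset.range (m+2), ((m+1-k : ℕ) : ℝ) * a k * w 0 ^ k * w 1 ^ (m+1-k-1))
          * w 1
        = ∑ k ∈ Finset.range (m+2), ((m+1-k : ℕ) : ℝ) * u k := by
      rw [Finset.sum_mul]
      refine Finset.sum_congr rfl fun k _ => ?_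
      by_cases hdk : m+1-k = 0
      · simp [hdk]
      · obtain ⟨j, hj⟩ : ∃ j, m+1-k = j+1 := ⟨m-k, by omega⟩
        simp only [hu]
        rw [hj]
        simp only [Nat.add_sub_cancel]
        rw [pow_succ]
        ring
    have t1xy : (∑ k ∈ Finset.range (m+2),
          (k:ℝ) * ((m+1-k : ℕ) : ℝ) * a k * w 0 ^ (k-1) * w 1 ^ (m+1-k-1)) * (w 0 * w 1)
        = ∑ k ∈ Finset.range (m+2), (k:ℝ) * ((m+1-k : ℕ) : ℝ) * u k := by
      rw [Finset.sum_mul]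
      refine Finset.sum_congr rfl fun k _ => ?_
      rcases k with _|k
      · simp
      · by_cases hdk : m+1-(k+1) = 0
        · simp [hdk]
        · obtain ⟨j, hj⟩ : ∃ j, m+1-(k+1) = j+1 := ⟨m-(k+1), by omega⟩
          simp only [hu]
          rw [hj]
          simp only [Nat.add_sub_cancel]
          rw [pow_succ, pow_succ]
          ring
    have t4 : (∑ k ∈ Finset.range (m+2),
          (k:ℝ) * ((k-1 : ℕ) : ℝ) * a k * w 0 ^ (k-2) * w 1 ^ (m+1-k)) * (w 0)^2
        = ∑ k ∈ Finset.range (m+2), (k:ℝ) * ((k-1 : ℕ) : ℝ) * u k := by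
      rw [Finset.sum_mul]
      refine Finset.sum_congr rfl fun k _ => ?_
      rcases k with _|_|k
      · simp
      · simp
      · simp only [hu]
        simp only [show (k:ℕ)+2-2 = k from by omega, show (k:ℕ)+2-1 = k+1 from by omega]
        rw [show w 0^(k+2) = w 0^k * w 0^2 from by rw [← pow_add]]
        ring
    have t5 : (∑ k ∈ Finset.range (m+2),
          ((m+1-k : ℕ) : ℝ) * ((m+1-k-1 : ℕ) : ℝ) * a k * w 0 ^ k * w 1 ^ (m+1-k-2)) * (w 1)^2
        = ∑ k ∈ Finset.range (m+2), ((m+1-k : ℕ) : ℝ) * ((m+1-k-1 : ℕ) : ℝ) * u k := by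
      rw [Finset.sum_mul]
      refine Finset.sum_congr rfl fun k _ => ?_
      by_cases h1 : m+1-k = 0
      · simp [h1]
      · by_cases h2 : m+1-k = 1
        · simp [h2]
        · obtain ⟨j, hj⟩ : ∃ j, m+1-k = j+2 := ⟨m+1-k-2, by omega⟩
          simp only [hu]
          rw [hj]
          simp only [Nat.add_sub_cancel, show (j:ℕ)+2-2 = j from by omega,
            show (j:ℕ)+2-1 = j+1 from by omega]
          rw [show w 1^(j+2) = w 1^j * w 1^2 from by rw [← pow_add]]
          ring
    constructor
    · -- mixed inequality
      rw [hA, hBx, hBy, hCxy]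
      by_cases hx : w 0 = 0
      · -- w 0 = 0
        have cA : ∑ k ∈ Finset.range (m+2), a k * w 0 ^ k * w 1 ^ (m+1-k)
            = a 0 * w 1 ^ (m+1) := by
          rw [Finset.sum_eq_single 0 (fun b _ hb => by simp [hx, zero_pow hb])
            (fun h => absurd (Finset.mem_range.mpr (by omega)) h)]
          simp
        have cBx : ∑ k ∈ Finset.range (m+2), (k:ℝ) * a k * w 0 ^ (k-1) * w 1 ^ (m+1-k)
            = a 1 * w 1 ^ m := by
          rw [Finset.sum_eq_single 1 (fun b _ hb => by
              rcases b with _|b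
              · simp
              · have hb' : b ≠ 0 := fun h => hb (by omega)
                simp [hx, zero_pow hb'])
            (fun h => absurd (Finset.mem_range.mpr (by omega)) h)]
          simp
        have cBy : ∑ k ∈ Finset.range (m+2), ((m+1-k : ℕ) : ℝ) * a k * w 0 ^ k * w 1 ^ (m+1-k-1)
            = ((m:ℝ)+1) * a 0 * w 1 ^ m := by
          rw [Finset.sum_eq_single 0 (fun b _ hb => by simp [hx, zero_pow hb])
            (fun h => absurd (Finset.mem_range.mpr (by omega)) h)]
          push_cast
          simp
        have cCxy : ∑ k ∈ Finset.range (m+2),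
              (k:ℝ) * ((m+1-k : ℕ) : ℝ) * a k * w 0 ^ (k-1) * w 1 ^ (m+1-k-1)
            = (m:ℝ) * a 1 * w 1 ^ (m-1) := by
          rw [Finset.sum_eq_single 1 (fun b _ hb => by
              rcases b with _|b
              · simp
              · have hb' : b ≠ 0 := fun h => hb (by omega)
                simp [hx, zero_pow hb'])
            (fun h => absurd (Finset.mem_range.mpr (by omega)) h)]
          push_cast
          simp
        rw [cA, cBx, cBy, cCxy]
        rcases m with _|n
        · norm_num
          nlinarith [mul_nonneg (hnn 1 (by omega)) (hnn 0 (by omega))]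
        · have hpow : ∀ (i j : ℕ), i + j = 2*n+2 → w 1^i * w 1^j = w 1^(2*n+2) :=
            fun i j hij => by rw [← pow_add, hij]
          calc a 0 * w 1^(n+1+1) * (((n+1 : ℕ) : ℝ) * a 1 * w 1^(n+1-1))
              = ((n:ℝ)+1) * (a 0 * a 1) * (w 1^(n+1+1) * w 1^(n+1-1)) := by push_cast; ring
            _ = ((n:ℝ)+1) * (a 0 * a 1) * w 1^(2*n+2) := by rw [hpow _ _ (by omega)]
            _ ≤ ((n:ℝ)+2) * (a 0 * a 1) * w 1^(2*n+2) := by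
                nlinarith [mul_nonneg (mul_nonneg (hnn 0 (by omega)) (hnn 1 (by omega)))
                  (pow_nonneg hy0 (2*n+2))]
            _ = a 1 * w 1^(n+1) * ((((n+1 : ℕ) : ℝ)+1) * a 0 * w 1^(n+1)) := by
                rw [← hpow (n+1) (n+1) (by omega)]; push_cast; ring
      · by_cases hy : w 1 = 0
        · -- w 1 = 0
          have cA : ∑ k ∈ Finset.range (m+2), a k * w 0 ^ k * w 1 ^ (m+1-k)
              = a (m+1) * w 0 ^ (m+1) := by
            rw [Finset.sum_eq_single (m+1) (fun b hb hbne => by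
                have : b < m+2 := Finset.mem_range.mp hb
                simp [hy, zero_pow (show m+1-b ≠ 0 from by omega)])
              (fun h => absurd (Finset.mem_range.mpr (by omega)) h)]
            simp [Nat.sub_self]
          have cBx : ∑ k ∈ Finset.range (m+2), (k:ℝ) * a k * w 0 ^ (k-1) * w 1 ^ (m+1-k)
              = ((m:ℝ)+1) * a (m+1) * w 0 ^ m := by
            rw [Finset.sum_eq_single (m+1) (fun b hb hbne => by
                have : b < m+2 := Finset.mem_range.mp hb
                simp [hy, zero_pow (show m+1-b ≠ 0 from by omega)])
              (fun h => absurd (Finset.mem_range.mpr (by omega)) h)]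
            push_cast
            simp [Nat.sub_self]
          have cBy : ∑ k ∈ Finset.range (m+2),
                ((m+1-k : ℕ) : ℝ) * a k * w 0 ^ k * w 1 ^ (m+1-k-1)
              = a m * w 0 ^ m := by
            rw [Finset.sum_eq_single m (fun b hb hbne => by
                have hblt : b < m+2 := Finset.mem_range.mp hb
                rcases eq_or_ne b (m+1) with rfl | hne2
                · simp [Nat.sub_self]
                · simp [hy, zero_pow (show m+1-b-1 ≠ 0 from by omega)])
              (fun h => absurd (Finset.mem_range.mpr (by omega)) h)]
            simp [show m+1-m = 1 from by omega, show m+1-m-1 = 0 from by omega]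
          have cCxy : ∑ k ∈ Finset.range (m+2),
                (k:ℝ) * ((m+1-k : ℕ) : ℝ) * a k * w 0 ^ (k-1) * w 1 ^ (m+1-k-1)
              = (m:ℝ) * a m * w 0 ^ (m-1) := by
            rw [Finset.sum_eq_single m (fun b hb hbne => by
                have hblt : b < m+2 := Finset.mem_range.mp hb
                rcases eq_or_ne b (m+1) with rfl | hne2
                · simp [Nat.sub_self]
                · simp [hy, zero_pow (show m+1-b-1 ≠ 0 from by omega)])
              (fun h => absurd (Finset.mem_range.mpr (by omega)) h)]
            simp [show m+1-m = 1 from by omega, show m+1-m-1 = 0 from by omega]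
          rw [cA, cBx, cBy, cCxy]
          rcases m with _|n
          · norm_num
            nlinarith [mul_nonneg (hnn 1 (by omega)) (hnn 0 (by omega))]
          · have hpow : ∀ (i j : ℕ), i + j = 2*n+2 → w 0^i * w 0^j = w 0^(2*n+2) :=
              fun i j hij => by rw [← pow_add, hij]
            calc a (n+2) * w 0^(n+1+1) * (((n+1 : ℕ) : ℝ) * a (n+1) * w 0^(n+1-1))
                = ((n:ℝ)+1) * (a (n+2) * a (n+1)) * (w 0^(n+1+1) * w 0^(n+1-1)) := by
                  push_cast; ring
              _ = ((n:ℝ)+1) * (a (n+2) * a (n+1)) * w 0^(2*n+2) := by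
                  rw [hpow _ _ (by omega)]
              _ ≤ ((n:ℝ)+2) * (a (n+2) * a (n+1)) * w 0^(2*n+2) := by
                  nlinarith [mul_nonneg (mul_nonneg (hnn (n+2) (by omega)) (hnn (n+1) (by omega)))
                    (pow_nonneg hx0 (2*n+2))]
              _ = (((n+1 : ℕ) : ℝ)+1) * a (n+2) * w 0^(n+1) * (a (n+1) * w 0^(n+1)) := by
                  rw [← hpow (n+1) (n+1) (by omega)]; push_cast; ring
        · have hxp : 0 < w 0 := lt_of_le_of_ne hx0 (Ne.symm hx)
          have hyp : 0 < w 1 := lt_of_le_of_ne hy0 (Ne.symm hy)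
          have hxyp : 0 < w 0 * w 1 := mul_pos hxp hyp
          rw [← mul_le_mul_iff_of_pos_right hxyp]
          calc (∑ k ∈ Finset.range (m+2), a k * w 0 ^ k * w 1 ^ (m+1-k))
                * (∑ k ∈ Finset.range (m+2),
                  (k:ℝ) * ((m+1-k : ℕ) : ℝ) * a k * w 0 ^ (k-1) * w 1 ^ (m+1-k-1))
                * (w 0 * w 1)
              = (∑ k ∈ Finset.range (m+2), a k * w 0 ^ k * w 1 ^ (m+1-k))
                * ((∑ k ∈ Finset.range (m+2),
                  (k:ℝ) * ((m+1-k : ℕ) : ℝ) * a k * w 0 ^ (k-1) * w 1 ^ (m+1-k-1))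
                  * (w 0 * w 1)) := by ring
            _ = (∑ k ∈ Finset.range (m+2), u k)
                * (∑ k ∈ Finset.range (m+2), (k:ℝ) * ((m+1-k : ℕ) : ℝ) * u k) := by
                rw [t1xy, tA]
            _ ≤ (∑ k ∈ Finset.range (m+2), (k:ℝ) * u k)
                * (∑ k ∈ Finset.range (m+2), ((m+1-k : ℕ) : ℝ) * u k) := EASY (m+1) u hu0
            _ = ((∑ k ∈ Finset.range (m+2), (k:ℝ) * a k * w 0 ^ (k-1) * w 1 ^ (m+1-k)) * w 0)
                * ((∑ k ∈ Finset.range (m+2),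
                    ((m+1-k : ℕ) : ℝ) * a k * w 0 ^ k * w 1 ^ (m+1-k-1)) * w 1) := by
                rw [t2, t3]
            _ = (∑ k ∈ Finset.range (m+2), (k:ℝ) * a k * w 0 ^ (k-1) * w 1 ^ (m+1-k))
                * (∑ k ∈ Finset.range (m+2),
                    ((m+1-k : ℕ) : ℝ) * a k * w 0 ^ k * w 1 ^ (m+1-k-1)) * (w 0 * w 1) := by
                ring
    · intro i
      fin_cases i
      · -- xx
        show eval w f * eval w (pderiv 0 (pderiv 0 f)) ≤ (eval w (pderiv 0 f))^2
        rw [hA, hBx, hCxx]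
        by_cases hx : w 0 = 0
        · -- w 0 = 0
          rcases m with _|n
          · have cz : ∑ k ∈ Finset.range (0+2),
                (k:ℝ) * ((k-1 : ℕ) : ℝ) * a k * w 0 ^ (k-2) * w 1 ^ (0+1-k) = 0 := by
              rw [Finset.sum_range_succ, Finset.sum_range_one]
              norm_num
            rw [cz, mul_zero]
            positivity
          · have cA : ∑ k ∈ Finset.range (n+1+2), a k * w 0 ^ k * w 1 ^ (n+1+1-k)
                = a 0 * w 1 ^ (n+1+1) := by
              rw [Finset.sum_eq_single 0 (fun b _ hb => by simp [hx, zero_pow hb])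
                (fun h => absurd (Finset.mem_range.mpr (by omega)) h)]
              simp
            have cBx : ∑ k ∈ Finset.range (n+1+2),
                  (k:ℝ) * a k * w 0 ^ (k-1) * w 1 ^ (n+1+1-k)
                = a 1 * w 1 ^ (n+1) := by
              rw [Finset.sum_eq_single 1 (fun b _ hb => by
                  rcases b with _|b
                  · simp
                  · have hb' : b ≠ 0 := fun h => hb (by omega)
                    simp [hx, zero_pow hb'])
                (fun h => absurd (Finset.mem_range.mpr (by omega)) h)]
              norm_num
            have cCxx : ∑ k ∈ Finset.range (n+1+2),
                  (k:ℝ) * ((k-1 : ℕ) : ℝ) * a k * w 0 ^ (k-2) * w 1 ^ (n+1+1-k)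
                = 2 * a 2 * w 1 ^ n := by
              rw [Finset.sum_eq_single 2 (fun b _ hb => by
                  rcases b with _|_|b2
                  · simp
                  · simp
                  · have hb2 : b2 ≠ 0 := fun h => hb (by omega)
                    simp [hx, zero_pow hb2])
                (fun h => absurd (Finset.mem_range.mpr (by omega)) h)]
              norm_num [show n+1+1-2 = n from by omega]
            rw [cA, cBx, cCxx]
            have h' := hulc 1 (by norm_num) (by omega)
            simp only [show (1:ℕ)-1 = 0 from rfl, Nat.choose_zero_right, Nat.cast_one,
              div_one, Nat.choose_one_right] at h'
            have ecast : ((n+1+1 : ℕ) : ℝ) = (n:ℝ)+2 := by push_cast; ring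
            rw [ecast] at h'
            have key : 2*(a 0 * a 2) ≤ (a 1)^2 := two_mul_le_sq h'
            have hpow : ∀ (i j : ℕ), i + j = 2*n+2 → w 1^i * w 1^j = w 1^(2*n+2) :=
              fun i j hij => by rw [← pow_add, hij]
            calc a 0 * w 1^(n+1+1) * (2 * a 2 * w 1^n)
                = (2*(a 0 * a 2)) * (w 1^(n+1+1) * w 1^n) := by ring
              _ = (2*(a 0 * a 2)) * w 1^(2*n+2) := by rw [hpow _ _ (by omega)]
              _ ≤ (a 1)^2 * w 1^(2*n+2) :=
                  mul_le_mul_of_nonneg_right key (pow_nonneg hy0 _)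
              _ = (a 1 * w 1^(n+1))^2 := by rw [← hpow (n+1) (n+1) (by omega)]; ring
        · have hxp : 0 < w 0 := lt_of_le_of_ne hx0 (Ne.symm hx)
          have hx2p : 0 < (w 0)^2 := by positivity
          rw [← mul_le_mul_iff_of_pos_right hx2p]
          calc (∑ k ∈ Finset.range (m+2), a k * w 0 ^ k * w 1 ^ (m+1-k))
                * (∑ k ∈ Finset.range (m+2),
                  (k:ℝ) * ((k-1 : ℕ) : ℝ) * a k * w 0 ^ (k-2) * w 1 ^ (m+1-k)) * (w 0)^2
              = (∑ k ∈ Finset.range (m+2), u k)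
                * (∑ k ∈ Finset.range (m+2), (k:ℝ) * ((k-1 : ℕ) : ℝ) * u k) := by
                rw [← t4, ← tA]; ring
            _ ≤ (∑ k ∈ Finset.range (m+2), (k:ℝ) * u k)^2 := CORE (m+1) u hu0 huulc huniz
            _ = ((∑ k ∈ Finset.range (m+2), (k:ℝ) * a k * w 0 ^ (k-1) * w 1 ^ (m+1-k))
                  * w 0)^2 := by rw [t2]
            _ = (∑ k ∈ Finset.range (m+2), (k:ℝ) * a k * w 0 ^ (k-1) * w 1 ^ (m+1-k))^2
                  * (w 0)^2 := by ring
      · -- yy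
        show eval w f * eval w (pderiv 1 (pderiv 1 f)) ≤ (eval w (pderiv 1 f))^2
        rw [hA, hBy, hCyy]
        by_cases hy : w 1 = 0
        · -- w 1 = 0
          rcases m with _|n
          · have cz : ∑ k ∈ Finset.range (0+2),
                ((0+1-k : ℕ) : ℝ) * ((0+1-k-1 : ℕ) : ℝ) * a k * w 0 ^ k * w 1 ^ (0+1-k-2)
                  = 0 := by
              rw [Finset.sum_range_succ, Finset.sum_range_one]
              norm_num
            rw [cz, mul_zero]
            positivity
          · have cA : ∑ k ∈ Finset.range (n+1+2), a k * w 0 ^ k * w 1 ^ (n+1+1-k)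
                = a (n+1+1) * w 0 ^ (n+1+1) := by
              rw [Finset.sum_eq_single (n+1+1) (fun b hb hbne => by
                  have : b < n+3 := Finset.mem_range.mp hb
                  simp [hy, zero_pow (show n+1+1-b ≠ 0 from by omega)])
                (fun h => absurd (Finset.mem_range.mpr (by omega)) h)]
              simp [Nat.sub_self]
            have cBy : ∑ k ∈ Finset.range (n+1+2),
                  ((n+1+1-k : ℕ) : ℝ) * a k * w 0 ^ k * w 1 ^ (n+1+1-k-1)
                = a (n+1) * w 0 ^ (n+1) := by
              rw [Finset.sum_eq_single (n+1) (fun b hb hbne => by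
                  have hblt : b < n+3 := Finset.mem_range.mp hb
                  rcases eq_or_ne b (n+1+1) with rfl | hne2
                  · simp [Nat.sub_self]
                  · simp [hy, zero_pow (show n+1+1-b-1 ≠ 0 from by omega)])
                (fun h => absurd (Finset.mem_range.mpr (by omega)) h)]
              simp [show n+1+1-(n+1) = 1 from by omega, show n+1+1-(n+1)-1 = 0 from by omega]
            have cCyy : ∑ k ∈ Finset.range (n+1+2),
                  ((n+1+1-k : ℕ) : ℝ) * ((n+1+1-k-1 : ℕ) : ℝ) * a k * w 0 ^ k
                    * w 1 ^ (n+1+1-k-2)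
                = 2 * a n * w 0 ^ n := by
              rw [Finset.sum_eq_single n (fun b hb hbne => by
                  have hblt : b < n+3 := Finset.mem_range.mp hb
                  rcases eq_or_ne b (n+1) with rfl | h1
                  · simp [show n+1+1-(n+1)-1 = 0 from by omega]
                  · rcases eq_or_ne b (n+1+1) with rfl | h2
                    · simp [show n+1+1-(n+1+1) = 0 from by omega]
                    · simp [hy, zero_pow (show n+1+1-b-2 ≠ 0 from by omega)])
                (fun h => absurd (Finset.mem_range.mpr (by omega)) h)]
              norm_num [show n+1+1-n = 2 from by omega, show n+1+1-n-1 = 1 from by omega,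
                show n+1+1-n-2 = 0 from by omega]
            rw [cA, cBy, cCyy]
            have h' := hulc (n+1) (by omega) (by omega)
            simp only [Nat.add_sub_cancel] at h'
            have e0 : (n+1+1).choose (n+1+1) = 1 := Nat.choose_self _
            have e1 : (n+1+1).choose n = (n+2).choose 2 := by
              have h2 := Nat.choose_symm (show 2 ≤ n+2 by omega)
              rw [show n+2-2 = n from by omega] at h2
              exact h2
            have e2 : (n+1+1).choose (n+1) = n+2 := by
              have h2 := Nat.choose_symm (show 1 ≤ n+2 by omega)
              rw [show n+2-1 = n+1 from by omega, Nat.choose_one_right] at h2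
              exact h2
            rw [e0, e1, e2] at h'
            simp only [Nat.cast_one, div_one] at h'
            have ecast : ((n+2 : ℕ) : ℝ) = (n:ℝ)+2 := by push_cast; ring
            rw [ecast, mul_comm] at h'
            have key : 2*(a (n+1+1) * a n) ≤ (a (n+1))^2 := two_mul_le_sq h'
            have hpow : ∀ (i j : ℕ), i + j = 2*n+2 → w 0^i * w 0^j = w 0^(2*n+2) :=
              fun i j hij => by rw [← pow_add, hij]
            calc a (n+1+1) * w 0^(n+1+1) * (2 * a n * w 0^n)
                = (2*(a (n+1+1) * a n)) * (w 0^(n+1+1) * w 0^n) := by ring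
              _ = (2*(a (n+1+1) * a n)) * w 0^(2*n+2) := by rw [hpow _ _ (by omega)]
              _ ≤ (a (n+1))^2 * w 0^(2*n+2) :=
                  mul_le_mul_of_nonneg_right key (pow_nonneg hx0 _)
              _ = (a (n+1) * w 0^(n+1))^2 := by rw [← hpow (n+1) (n+1) (by omega)]; ring
        · have hyp : 0 < w 1 := lt_of_le_of_ne hy0 (Ne.symm hy)
          have hy2p : 0 < (w 1)^2 := by positivity
          rw [← mul_le_mul_iff_of_pos_right hy2p]
          calc (∑ k ∈ Finset.range (m+2), a k * w 0 ^ k * w 1 ^ (m+1-k))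
                * (∑ k ∈ Finset.range (m+2),
                  ((m+1-k : ℕ) : ℝ) * ((m+1-k-1 : ℕ) : ℝ) * a k * w 0 ^ k * w 1 ^ (m+1-k-2))
                * (w 1)^2
              = (∑ k ∈ Finset.range (m+2), u k)
                * (∑ k ∈ Finset.range (m+2),
                    ((m+1-k : ℕ) : ℝ) * ((m+1-k-1 : ℕ) : ℝ) * u k) := by
                rw [← t5, ← tA]; ring
            _ ≤ (∑ k ∈ Finset.range (m+2), ((m+1-k : ℕ) : ℝ) * u k)^2 :=
                CORE_rev (m+1) u hu0 huulc huniz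
            _ = ((∑ k ∈ Finset.range (m+2),
                  ((m+1-k : ℕ) : ℝ) * a k * w 0 ^ k * w 1 ^ (m+1-k-1)) * w 1)^2 := by
                rw [t3]
            _ = (∑ k ∈ Finset.range (m+2),
                  ((m+1-k : ℕ) : ℝ) * a k * w 0 ^ k * w 1 ^ (m+1-k-1))^2 * (w 1)^2 := by
                ring
end
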